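/- arXiv:math/9901106 — 4 statements merged into one kernel-verified Lean document; each statement's English description precedes it below -/
import Mathlib

section
/- Let G be a group and let (H_k)_{k≥0} be a sequence of subgroups of G such that each H_k is non-trivial, not infinite cyclic, and indecomposable with respect to free products, H_k ⊆ H_{k+1} for all k, and G = ⋃_{k≥0} H_k. Then G is indecomposable with respect to free products. -/
universe u

/-- A group is decomposable if it is isomorphic to a free product of two
non-trivial groups. -/
def Decomposable (G : Type u) [Group G] : Prop :=
  ∃ (K L : Type u) (_ : Group K) (_ : Group L),
    Nontrivial K ∧ Nontrivial L ∧ Nonempty (G ≃* Monoid.Coprod K L)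

namespace FPK
open Monoid Monoid.CoprodI

variable {ι : Type*} {M : ι → Type*} [∀ i, Group (M i)] [DecidableEq ι] [∀ i, DecidableEq (M i)]

/-- head index of the reduced word of `g`, with default `δ` for `g = 1`. -/
noncomputable def hd (δ : ι) (g : CoprodI M) : ι :=
  ((Word.equiv (M := M)) g).fstIdx.getD δ

lemma equiv_symm_eq (w : Word M) : (Word.equiv (M := M)).symm w = w.prod := rfl

lemma equiv_prod (w : Word M) : Word.equiv (M := M) w.prod = w := by
  rw [← equiv_symm_eq, Equiv.apply_symm_apply]

lemma toWord_prod {i j : ι} (w : NeWord M i j) : (w.toWord).prod = w.prod := rfl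

lemma equiv_neWord {i j : ι} (w : NeWord M i j) : Word.equiv (M := M) w.prod = w.toWord := by
  rw [← toWord_prod, equiv_prod]

lemma hd_one (δ : ι) : hd δ (1 : CoprodI M) = δ := by
  have h1 : (1 : CoprodI M) = (Word.empty : Word M).prod := by simp [Word.prod_empty]
  rw [hd, h1, equiv_prod]
  rfl

lemma hd_prodNe {i j : ι} (δ : ι) (w : NeWord M i j) : hd δ w.prod = i := by
  rw [hd, equiv_neWord]
  have := w.toList_head?
  simp [Word.fstIdx, NeWord.toWord, this]

lemma prod_ne_one {i j : ι} (w : NeWord M i j) : w.prod ≠ 1 := by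
  intro h
  have h2 : Word.equiv (M := M) w.prod = w.toWord := equiv_neWord w
  rw [h] at h2
  have h3 : (Word.equiv (M := M)) 1 = Word.empty := by
    have h1 : (1 : CoprodI M) = (Word.empty : Word M).prod := by simp [Word.prod_empty]
    rw [h1, equiv_prod]
  rw [h3] at h2
  exact w.toList_ne_nil (by rw [show w.toList = w.toWord.toList from rfl, ← h2]; rfl)

lemma exists_neWord {g : CoprodI M} (hg : g ≠ 1) : ∃ i j, ∃ w : NeWord M i j, w.prod = g := by
  have hne : Word.equiv (M := M) g ≠ Word.empty := by
    intro h
    apply hg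
    have := congrArg (Word.equiv (M := M)).symm h
    rw [Equiv.symm_apply_apply, equiv_symm_eq, Word.prod_empty] at this
    exact this
  obtain ⟨i, j, w, hw⟩ := NeWord.of_word _ hne
  refine ⟨i, j, w, ?_⟩
  have : w.prod = (Word.equiv (M := M) g).prod := by rw [← hw, toWord_prod]
  rw [this, ← equiv_symm_eq, Equiv.symm_apply_apply]

lemma hd_eq_hd {g : CoprodI M} (hg : g ≠ 1) (δ δ' : ι) : hd δ g = hd δ' g := by
  obtain ⟨i, j, w, rfl⟩ := exists_neWord hg
  rw [hd_prodNe, hd_prodNe]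

/-- last index, via the inverse. -/
noncomputable def tl (δ : ι) (g : CoprodI M) : ι := hd δ g⁻¹

lemma tl_prodNe {i j : ι} (δ : ι) (w : NeWord M i j) : tl δ w.prod = j := by
  rw [tl, ← NeWord.inv_prod, hd_prodNe]

/-- no-cancellation concatenation lemma -/
lemma hd_tl_mul {x y : CoprodI M} (hx : x ≠ 1) (hy : y ≠ 1) {δ₁ δ₂ : ι}
    (h : hd δ₁ y ≠ tl δ₂ x) (δ δ' : ι) :
    x * y ≠ 1 ∧ hd δ (x * y) = hd δ' x ∧ tl δ (x * y) = tl δ' y := by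
  obtain ⟨i₁, j₁, wx, rfl⟩ := exists_neWord hx
  obtain ⟨i₂, j₂, wy, rfl⟩ := exists_neWord hy
  rw [hd_prodNe, tl_prodNe] at h
  have hne : j₁ ≠ i₂ := fun hh => h hh.symm
  have hp : (NeWord.append wx hne wy).prod = wx.prod * wy.prod := NeWord.append_prod
  refine ⟨?_, ?_, ?_⟩
  · rw [← hp]; exact prod_ne_one _
  · rw [← hp, hd_prodNe, hd_prodNe]
  · rw [← hp, tl_prodNe, tl_prodNe]

lemma hd_prod_mul_last {i₁ j₁ : ι} (w : NeWord M i₁ j₁) : ∀ (m : M j₁),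
    w.prod * of m = 1 ∨ (w.prod * of m ≠ 1 ∧ ∀ δ, hd δ (w.prod * of m) = i₁) := by
  induction w with
  | singleton x hx =>
    intro m
    by_cases hxm : x * m = 1
    · left
      rw [NeWord.prod_singleton, ← MonoidHom.map_mul, hxm, MonoidHom.map_one]
    · right
      have h : (NeWord.singleton x hx).prod * of m = (NeWord.singleton (x * m) hxm).prod := by
        simp [MonoidHom.map_mul]
      rw [h]
      exact ⟨prod_ne_one _, fun δ => hd_prodNe _ _⟩
  | append w₁ hne w₂ ih₁ ih₂ =>
    rename_i i j k l
    intro m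
    have hp : (NeWord.append w₁ hne w₂).prod * of m = w₁.prod * (w₂.prod * of m) := by
      rw [NeWord.append_prod, mul_assoc]
    rcases ih₂ m with h2 | ⟨h2ne, h2hd⟩
    · right
      rw [hp, h2, mul_one]
      exact ⟨prod_ne_one _, fun δ => hd_prodNe _ _⟩
    · right
      have h2hd' : hd k (w₂.prod * of m) ≠ tl k w₁.prod := by
        rw [h2hd k, tl_prodNe]; exact hne.symm
      rw [hp]
      refine ⟨(hd_tl_mul (prod_ne_one w₁) h2ne h2hd' k k).1, fun δ => ?_⟩
      obtain ⟨hne1, hhd, _⟩ := hd_tl_mul (prod_ne_one w₁) h2ne h2hd' δ δ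
      rw [hhd, hd_prodNe]

/-- right multiplication by a letter of index `i` does not change `hd i`. -/
lemma hd_mul_of {i : ι} (x : CoprodI M) (m : M i) : hd i (x * of m) = hd i x := by
  by_cases hm : m = 1
  · rw [hm, MonoidHom.map_one, mul_one]
  by_cases hx : x = 1
  · rw [hx, one_mul, hd_one]
    have : of m = (NeWord.singleton m hm).prod := by simp
    rw [this, hd_prodNe]
  obtain ⟨i₁, j₁, w, rfl⟩ := exists_neWord hx
  by_cases hji : j₁ = i
  · subst hji
    rcases hd_prod_mul_last w m with h | ⟨_, hh⟩
    · have hm' : m⁻¹ ≠ 1 := inv_ne_one.2 hm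
      have hxm : w.prod = (NeWord.singleton m⁻¹ hm').prod := by
        rw [NeWord.prod_singleton, MonoidHom.map_inv]
        exact eq_inv_of_mul_eq_one_left h
      rw [h, hd_one, hxm, hd_prodNe]
    · rw [hh _, hd_prodNe]
  · have hy : (of m : CoprodI M) ≠ 1 := fun h => hm (of_injective i (by rw [h, MonoidHom.map_one]))
    have hhd : hd i (of m) ≠ tl i w.prod := by
      have : of m = (NeWord.singleton m hm).prod := by simp
      rw [this, hd_prodNe, tl_prodNe]
      exact fun h => hji h.symm
    obtain ⟨_, hh, _⟩ := hd_tl_mul (prod_ne_one w) hy hhd i i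
    rw [hh]

/-- Finiteness of the separating set, base form. -/
lemma E_fin_aux (β δ : ι) (g : CoprodI M) :
    {q : CoprodI M | hd β q⁻¹ ≠ hd δ (q⁻¹ * g)}.Finite := by
  classical
  set f : ℕ → CoprodI M := fun n =>
    g * (List.prod ((((Word.equiv (M := M)) g).toList.drop n).map (fun l => of l.snd)))⁻¹ with hf
  have hsub : {q : CoprodI M | hd β q⁻¹ ≠ hd δ (q⁻¹ * g)} ⊆
      insert 1 (insert g (f '' (Set.Iic ((Word.equiv (M := M) g).toList.length)))) := by
    intro q hq
    simp only [Set.mem_setOf_eq] at hq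
    by_cases hq1 : q = 1
    · exact Set.mem_insert_iff.2 (Or.inl hq1)
    by_cases hqg : q = g
    · exact Set.mem_insert_iff.2 (Or.inr (Set.mem_insert_iff.2 (Or.inl hqg)))
    have hx : q⁻¹ ≠ 1 := fun h => hq1 (inv_eq_one.mp h)
    have hz : q⁻¹ * g ≠ 1 := fun h => hqg (inv_mul_eq_one.mp h)
    obtain ⟨ix, jx, wx, hwx⟩ := exists_neWord hx
    obtain ⟨iz, jz, wz, hwz⟩ := exists_neWord hz
    rw [← hwz, ← hwx, hd_prodNe, hd_prodNe] at hq
    have hlast : ix ≠ iz := hq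
    have hinvlast : tl β wx.inv.prod = ix := by rw [tl_prodNe]
    have happ : (NeWord.append wx.inv hlast wz).prod = g := by
      rw [NeWord.append_prod, NeWord.inv_prod, hwx, hwz, inv_inv, ← mul_assoc,
        mul_inv_cancel, one_mul]
    have hlist : ((Word.equiv (M := M)) g).toList = wx.inv.toList ++ wz.toList := by
      rw [← happ, equiv_neWord]; rfl
    refine Set.mem_insert_iff.2 (Or.inr (Set.mem_insert_iff.2 (Or.inr ?_)))
    refine ⟨wx.inv.toList.length, ?_, ?_⟩
    · simp [hlist]
    · have hdrop : (((Word.equiv (M := M)) g).toList.drop wx.inv.toList.length) = wz.toList := by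
        rw [hlist, List.drop_left]
      have hzprod : List.prod ((wz.toList).map (fun l => of l.snd)) = wz.prod := rfl
      rw [hf]
      simp only [hdrop, hzprod, hwz]
      rw [mul_inv_rev, inv_inv, ← mul_assoc, mul_inv_cancel, one_mul]
  exact Set.Finite.subset (by
    apply Set.Finite.insert
    apply Set.Finite.insert
    exact Set.Finite.image _ (Set.finite_Iic _)) hsub


open Monoid Monoid.CoprodI

variable {M : Bool → Type*} [∀ i, Group (M i)] [∀ i, DecidableEq (M i)]

/-- side function: which side of edge `q` the vertex `(g, δ)` (coset g·M δ) lies on. -/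
noncomputable def phi (q : CoprodI M) (v : CoprodI M × Bool) : Bool := hd v.2 (q⁻¹ * v.1)

/-- set of edges separating two vertices -/
def Ew (u w : CoprodI M × Bool) : Set (CoprodI M) := {q | phi q u ≠ phi q w}

lemma mem_Ew {q : CoprodI M} {u w : CoprodI M × Bool} : q ∈ Ew u w ↔ phi q u ≠ phi q w :=
  Iff.rfl

lemma phi_smul (f q : CoprodI M) (v : CoprodI M × Bool) :
    phi (f * q) (f * v.1, v.2) = phi q v := by
  simp [phi, mul_assoc]

lemma Ew_symm (u w : CoprodI M × Bool) : Ew u w = Ew w u := by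
  ext q; simp [Ew]; tauto

private lemma bool_xor3 (a b c : Bool) : (a ≠ c) ↔ ¬((a ≠ b) ↔ (b ≠ c)) := by
  revert a b c; decide

lemma mem_Ew_tri (v : CoprodI M × Bool) {q : CoprodI M} {u w : CoprodI M × Bool} :
    q ∈ Ew u w ↔ ¬(q ∈ Ew u v ↔ q ∈ Ew v w) :=
  bool_xor3 (phi q u) (phi q v) (phi q w)

lemma Ew_self (u : CoprodI M × Bool) : Ew u u = ∅ := by
  ext q; simp [Ew]

lemma mem_Ew_smul (f q : CoprodI M) (u w : CoprodI M × Bool) :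
    f * q ∈ Ew (f * u.1, u.2) (f * w.1, w.2) ↔ q ∈ Ew u w := by
  simp only [mem_Ew, phi_smul]

lemma mem_Ew_pair {i j : Bool} (hij : i ≠ j) (g q : CoprodI M) :
    q ∈ Ew (g, i) (g, j) ↔ q = g := by
  simp only [mem_Ew, phi]
  constructor
  · intro h
    by_contra hqg
    have : q⁻¹ * g ≠ 1 := fun hh => hqg (inv_mul_eq_one.mp hh)
    exact h (hd_eq_hd this _ _)
  · intro h
    subst h
    rw [inv_mul_cancel, hd_one, hd_one]
    exact hij

lemma phi_coset {i : Bool} (q g : CoprodI M) (m : M i) :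
    phi q (g * of m, i) = phi q (g, i) := by
  simp only [phi, ← mul_assoc]
  exact hd_mul_of _ m

lemma Ew_finite (u w : CoprodI M × Bool) : (Ew u w).Finite := by
  have hsub : Ew u w ⊆ (fun r => u.1 * r) ''
      {r : CoprodI M | hd u.2 r⁻¹ ≠ hd w.2 (r⁻¹ * (u.1⁻¹ * w.1))} := by
    intro q hq
    refine ⟨u.1⁻¹ * q, ?_, by simp⟩
    simp only [Set.mem_setOf_eq]
    have h1 : (u.1⁻¹ * q)⁻¹ = q⁻¹ * u.1 := by rw [mul_inv_rev, inv_inv]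
    have h2 : q⁻¹ * u.1 * (u.1⁻¹ * w.1) = q⁻¹ * w.1 := by group
    rw [h1, h2]
    exact hq
  exact Set.Finite.subset (Set.Finite.image _ (E_fin_aux _ _ _)) hsub

/- ### the subgroup layer -/
variable (H : Subgroup (CoprodI M))

/-- separating H-edges -/
def SE (u w : CoprodI M × Bool) : Set (CoprodI M) := Ew u w ∩ (H : Set (CoprodI M))

lemma SE_finite (u w : CoprodI M × Bool) : (SE H u w).Finite :=
  (Ew_finite u w).subset Set.inter_subset_left

lemma mem_SE {q : CoprodI M} {u w : CoprodI M × Bool} :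
    q ∈ SE H u w ↔ q ∈ Ew u w ∧ q ∈ H := Iff.rfl

lemma SE_symm (u w : CoprodI M × Bool) : SE H u w = SE H w u := by
  rw [SE, SE, Ew_symm]

lemma SE_smul_empty {f : CoprodI M} (hf : f ∈ H) (u w : CoprodI M × Bool) :
    SE H (f * u.1, u.2) (f * w.1, w.2) = ∅ ↔ SE H u w = ∅ := by
  constructor
  · intro h
    ext q
    simp only [Set.mem_empty_iff_false, iff_false]
    intro hq
    have : f * q ∈ SE H (f * u.1, u.2) (f * w.1, w.2) := by
      refine ⟨(mem_Ew_smul f q u w).2 hq.1, ?_⟩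
      exact mul_mem hf hq.2
    rw [h] at this
    exact this
  · intro h
    ext q
    simp only [Set.mem_empty_iff_false, iff_false]
    intro hq
    have hq' : f⁻¹ * q ∈ SE H u w := by
      constructor
      · have := (mem_Ew_smul f (f⁻¹ * q) u w).1
        rw [mul_inv_cancel_left] at this
        exact this hq.1
      · exact mul_mem (inv_mem hf) hq.2
    rw [h] at hq'
    exact hq'

/-- the vertex stabilizer subgroups -/
def CC (β : Bool) : Subgroup (CoprodI M) where
  carrier := {h : CoprodI M | h ∈ H ∧ SE H ((1 : CoprodI M), β) (h, β) = ∅}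
  one_mem' := ⟨one_mem H, by rw [show ((1 : CoprodI M), β) = ((1 : CoprodI M), β) from rfl]
                             ext q; simp [SE, Ew_self]⟩
  mul_mem' := by
    rintro h₁ h₂ ⟨h₁H, h₁e⟩ ⟨h₂H, h₂e⟩
    refine ⟨mul_mem h₁H h₂H, ?_⟩
    ext q
    simp only [Set.mem_empty_iff_false, iff_false]
    rintro ⟨hqE, hqH⟩
    have h2' : SE H (h₁ * 1, β) (h₁ * h₂, β) = ∅ := by
      have := (SE_smul_empty H h₁H ((1 : CoprodI M), β) (h₂, β)).2 h₂e
      simpa using this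
    rw [mem_Ew_tri (v := (h₁, β))] at hqE
    by_cases hq1 : q ∈ Ew ((1 : CoprodI M), β) (h₁, β)
    · exact (Set.eq_empty_iff_forall_notMem.1 h₁e q) ⟨hq1, hqH⟩
    · have hq2 : q ∈ Ew ((h₁ : CoprodI M), β) (h₁ * h₂, β) := by tauto
      have : q ∈ SE H (h₁ * 1, β) (h₁ * h₂, β) := by
        constructor
        · simpa using hq2
        · exact hqH
      rw [h2'] at this
      exact this
  inv_mem' := by
    rintro h ⟨hH, he⟩
    refine ⟨inv_mem hH, ?_⟩
    have := (SE_smul_empty H (inv_mem hH) ((h : CoprodI M), β) ((1 : CoprodI M), β)).2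
      (by rw [SE_symm]; exact he)
    simpa [SE_symm] using this

lemma mem_CC {β : Bool} {h : CoprodI M} :
    h ∈ CC H β ↔ h ∈ H ∧ SE H ((1 : CoprodI M), β) (h, β) = ∅ := Iff.rfl

/-- the set of "translators" -/
def TT : Set (CoprodI M) :=
  {t : CoprodI M | t ∈ H ∧ SE H ((1 : CoprodI M), true) (t, false) = ∅}


lemma exists_side (u : CoprodI M × Bool) (q : CoprodI M) : ∃ ε, q ∉ Ew u (q, ε) := by
  by_cases h : q ∈ Ew u (q, true)
  · refine ⟨false, fun hf => ?_⟩
    have hpair : q ∈ Ew ((q : CoprodI M), true) (q, false) :=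
      (mem_Ew_pair (by simp) q q).2 rfl
    have := (mem_Ew_tri ((q : CoprodI M), true) (u := u) (w := ((q : CoprodI M), false))).1 hf
    tauto
  · exact ⟨true, h⟩

lemma nesting {β : Bool} {w : CoprodI M × Bool} {q : CoprodI M} {ε : Bool}
    (hqw : q ∈ Ew ((1 : CoprodI M), β) w) (hnear : q ∉ Ew ((1 : CoprodI M), β) (q, ε)) :
    Disjoint (Ew ((1 : CoprodI M), β) (q, ε)) (Ew (q, ε) w) := by
  rw [Set.disjoint_left]
  intro q' hA hB
  obtain ⟨g, δ⟩ := w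
  simp only [mem_Ew, phi, mul_one, not_not] at hqw hnear hA hB
  rw [inv_mul_cancel, hd_one] at hnear
  have hAq : hd β q'⁻¹ ≠ hd ε (q'⁻¹ * q) := hA
  have hBq : hd ε (q'⁻¹ * q) ≠ hd δ (q'⁻¹ * g) := hB
  set y := q'⁻¹ * q with hy
  by_cases hy1 : y = 1
  · have hqq' : q' = q := by
      have := hy1
      rw [hy] at this
      exact (inv_mul_eq_one.mp this)
    rw [hqq', hy1, hd_one] at hAq
    exact hAq hnear
  · have hyne : y⁻¹ ≠ 1 := inv_ne_one.2 hy1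
    have hqinv : q⁻¹ = y⁻¹ * q'⁻¹ := by rw [hy]; group
    have hqg : q⁻¹ * g = y⁻¹ * (q'⁻¹ * g) := by rw [hy]; group
    have claim1 : hd β q⁻¹ = hd β y⁻¹ := by
      by_cases hq' : q'⁻¹ = 1
      · rw [hqinv, hq', mul_one]
      · have hhyp : hd β q'⁻¹ ≠ tl β y⁻¹ := by
          rw [tl, inv_inv]
          intro hcon
          apply hAq
          rw [hcon]
          by_cases hcy : y = 1
          · exact absurd hcy hy1
          · exact hd_eq_hd hcy _ _
        obtain ⟨_, hh, _⟩ := hd_tl_mul hyne hq' hhyp β β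
        rw [hqinv, hh]
    have claim2 : hd δ (q⁻¹ * g) = hd β y⁻¹ := by
      by_cases hqg1 : q'⁻¹ * g = 1
      · rw [hqg, hqg1, mul_one]
        exact hd_eq_hd hyne _ _
      · have hhyp : hd δ (q'⁻¹ * g) ≠ tl δ y⁻¹ := by
          rw [tl, inv_inv]
          intro hcon
          apply hBq
          rw [hcon]
          exact (hd_eq_hd hy1 δ ε).symm
        obtain ⟨_, hh, _⟩ := hd_tl_mul hyne hqg1 hhyp δ δ
        rw [hqg, hh]
        exact hd_eq_hd hyne _ _
    exact hqw (claim1.trans claim2.symm)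

lemma exists_gate {β : Bool} {w : CoprodI M × Bool}
    (hne : (SE H ((1 : CoprodI M), β) w).Nonempty) :
    ∃ q ∈ SE H ((1 : CoprodI M), β) w, ∃ ε, q ∉ Ew ((1 : CoprodI M), β) (q, ε) ∧
      SE H ((1 : CoprodI M), β) (q, ε) = ∅ := by
  classical
  have hsides := fun q : CoprodI M => exists_side ((1 : CoprodI M), β) q
  choose side hside using hsides
  obtain ⟨q₀, hq₀, hmin⟩ := Set.exists_min_image _
    (fun q => (Ew ((1 : CoprodI M), β) (q, side q)).ncard) (SE_finite H _ _) hne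
  refine ⟨q₀, hq₀, side q₀, hside q₀, ?_⟩
  by_contra hne'
  obtain ⟨q', hq'⟩ := Set.nonempty_iff_ne_empty.2 hne'
  have hd1 : Disjoint (Ew ((1 : CoprodI M), β) (q₀, side q₀)) (Ew (q₀, side q₀) w) :=
    nesting hq₀.1 (hside q₀)
  have hq'w : q' ∈ Ew ((1 : CoprodI M), β) w := by
    rw [mem_Ew_tri ((q₀ : CoprodI M), side q₀)]
    have h1 : q' ∈ Ew ((1 : CoprodI M), β) (q₀, side q₀) := hq'.1
    have h2 : q' ∉ Ew ((q₀ : CoprodI M), side q₀) w := fun hh => Set.disjoint_left.1 hd1 h1 hh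
    tauto
  have hsub : Ew ((1 : CoprodI M), β) (q', side q') ⊂ Ew ((1 : CoprodI M), β) (q₀, side q₀) := by
    constructor
    · intro r hr
      have hd2 : Disjoint (Ew ((1 : CoprodI M), β) (q', side q'))
          (Ew (q', side q') (q₀, side q₀)) := nesting hq'.1 (hside q')
      rw [mem_Ew_tri ((q' : CoprodI M), side q')]
      have h2 : r ∉ Ew ((q' : CoprodI M), side q') (q₀, side q₀) :=
        fun hh => Set.disjoint_left.1 hd2 hr hh
      tauto
    · intro hcon
      exact (hside q') (hcon hq'.1)
  have hlt : (Ew ((1 : CoprodI M), β) (q', side q')).ncard <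
      (Ew ((1 : CoprodI M), β) (q₀, side q₀)).ncard :=
    Set.ncard_lt_ncard hsub (Ew_finite _ _)
  exact absurd (hmin q' ⟨hq'w, hq'.2⟩) (not_le.2 hlt)

lemma TT_of_inv {h : CoprodI M} (hH : h ∈ H)
    (hS : SE H ((1 : CoprodI M), false) (h, true) = ∅) : h⁻¹ ∈ TT H := by
  refine ⟨inv_mem hH, ?_⟩
  have := (SE_smul_empty H (inv_mem hH) ((h : CoprodI M), true) ((1 : CoprodI M), false)).2
    (by rw [SE_symm]; exact hS)
  simpa using this

/-- the cut-one-edge-off computation -/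
lemma SE_cut {β ε : Bool} {q h : CoprodI M} (hq : q ∈ SE H ((1 : CoprodI M), β) (h, true))
    (hclean : SE H ((1 : CoprodI M), β) (q, ε) = ∅) :
    SE H ((q : CoprodI M), !ε) (h, true) = SE H ((1 : CoprodI M), β) (h, true) \ {q} := by
  ext r
  constructor
  · rintro ⟨hrE, hrH⟩
    have hrq : r ∈ Ew ((q : CoprodI M), !ε) (q, ε) ↔ r = q := mem_Ew_pair (by simp) q r
    have hr2 : r ∉ Ew ((q : CoprodI M), ε) ((1 : CoprodI M), β) := by
      intro hcon
      have : r ∈ SE H ((1 : CoprodI M), β) (q, ε) := ⟨by rw [Ew_symm] at hcon; exact hcon, hrH⟩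
      rw [hclean] at this
      exact this
    have hrE' := (mem_Ew_tri ((q : CoprodI M), ε)).1 hrE
    have hstep : r ∈ Ew ((q : CoprodI M), ε) (h, true) ↔
        r ∈ Ew ((1 : CoprodI M), β) (h, true) := by
      rw [mem_Ew_tri ((1 : CoprodI M), β)]
      tauto
    by_cases hreq : r = q
    · exfalso
      subst hreq
      have h1 : r ∈ Ew ((r : CoprodI M), !ε) (r, ε) := hrq.2 rfl
      have h2 : r ∈ Ew ((r : CoprodI M), ε) (h, true) := hstep.2 hq.1
      tauto
    · refine ⟨⟨?_, hrH⟩, hreq⟩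
      have h1 : r ∉ Ew ((q : CoprodI M), !ε) (q, ε) := fun hh => hreq (hrq.1 hh)
      rw [← hstep]
      tauto
  · rintro ⟨⟨hrE, hrH⟩, hrq⟩
    refine ⟨?_, hrH⟩
    have hrq' : r ∈ Ew ((q : CoprodI M), !ε) (q, ε) ↔ r = q := mem_Ew_pair (by simp) q r
    have hr2 : r ∉ Ew ((q : CoprodI M), ε) ((1 : CoprodI M), β) := by
      intro hcon
      have : r ∈ SE H ((1 : CoprodI M), β) (q, ε) := ⟨by rw [Ew_symm] at hcon; exact hcon, hrH⟩
      rw [hclean] at this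
      exact this
    have hstep : r ∈ Ew ((q : CoprodI M), ε) (h, true) ↔
        r ∈ Ew ((1 : CoprodI M), β) (h, true) := by
      rw [mem_Ew_tri ((1 : CoprodI M), β)]
      tauto
    rw [mem_Ew_tri ((q : CoprodI M), ε)]
    have h1 : r ∉ Ew ((q : CoprodI M), !ε) (q, ε) := fun hh => hrq (hrq'.1 hh)
    have h2 : r ∈ Ew ((q : CoprodI M), ε) (h, true) := hstep.2 hrE
    tauto

lemma SE_translate {q : CoprodI M} (hqH : q ∈ H) (ε : Bool) (h : CoprodI M) :
    SE H ((1 : CoprodI M), ε) (q⁻¹ * h, true) = (fun r => q⁻¹ * r) ''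
      (SE H ((q : CoprodI M), ε) (h, true)) := by
  ext s
  constructor
  · rintro ⟨hsE, hsH⟩
    refine ⟨q * s, ⟨?_, mul_mem hqH hsH⟩, by simp⟩
    have := (mem_Ew_smul q s ((1 : CoprodI M), ε) (q⁻¹ * h, true)).2 hsE
    simpa using this
  · rintro ⟨r, ⟨hrE, hrH⟩, rfl⟩
    refine ⟨?_, mul_mem (inv_mem hqH) hrH⟩
    have := (mem_Ew_smul q⁻¹ r ((q : CoprodI M), ε) (h, true)).2 hrE
    simpa using this

def genSet : Set (CoprodI M) := (CC H true : Set (CoprodI M)) ∪ (CC H false) ∪ TT H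

theorem generation : ∀ h ∈ H, h ∈ Subgroup.closure (genSet H) := by
  suffices haux : ∀ n : ℕ, ∀ β : Bool, ∀ h, h ∈ H →
      (SE H ((1 : CoprodI M), β) (h, true)).ncard ≤ n →
      h ∈ Subgroup.closure (genSet H) by
    intro h hH
    exact haux _ true h hH le_rfl
  intro n
  induction n using Nat.strong_induction_on with
  | _ n ih =>
    intro β h hH hcard
    by_cases hS : SE H ((1 : CoprodI M), β) (h, true) = ∅
    · cases β
      · have := TT_of_inv H hH hS
        have hmem : h⁻¹ ∈ Subgroup.closure (genSet H) :=
          Subgroup.subset_closure (Or.inr this)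
        simpa using inv_mem hmem
      · exact Subgroup.subset_closure (Or.inl (Or.inl ⟨hH, hS⟩))
    · have hne := Set.nonempty_iff_ne_empty.2 hS
      obtain ⟨q, hq, ε, hnear, hclean⟩ := exists_gate H hne
      have hqH : q ∈ H := hq.2
      have hqgen : q ∈ Subgroup.closure (genSet H) := by
        cases β <;> cases ε
        · -- β = false, ε = false : q ∈ CC false
          exact Subgroup.subset_closure (Or.inl (Or.inr ⟨hqH, hclean⟩))
        · -- β = false, ε = true : q⁻¹ ∈ TT
          have := TT_of_inv H hqH hclean
          have hmem : q⁻¹ ∈ Subgroup.closure (genSet H) :=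
            Subgroup.subset_closure (Or.inr this)
          simpa using inv_mem hmem
        · -- β = true, ε = false : q ∈ TT
          exact Subgroup.subset_closure (Or.inr ⟨hqH, hclean⟩)
        · -- β = true, ε = true : q ∈ CC true
          exact Subgroup.subset_closure (Or.inl (Or.inl ⟨hqH, hclean⟩))
      have hcut := SE_cut H hq hclean
      have htrans := SE_translate H hqH (!ε) h
      rw [hcut] at htrans
      have hcard' : (SE H ((1 : CoprodI M), !ε) (q⁻¹ * h, true)).ncard <
          (SE H ((1 : CoprodI M), β) (h, true)).ncard := by
        rw [htrans, Set.ncard_image_of_injective _ (mul_right_injective q⁻¹)]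
        exact Set.ncard_diff_singleton_lt_of_mem hq (SE_finite H _ _)
      have hlt : (SE H ((1 : CoprodI M), !ε) (q⁻¹ * h, true)).ncard < n :=
        lt_of_lt_of_le hcard' hcard
      have hh' : q⁻¹ * h ∈ Subgroup.closure (genSet H) :=
        ih _ hlt (!ε) (q⁻¹ * h) (mul_mem (inv_mem hqH) hH) le_rfl
      have : h = q * (q⁻¹ * h) := by group
      rw [this]
      exact mul_mem hqgen hh'

/- ### injectivity machinery -/

/-- product of a tagged word -/
def piL {Γ : Type*} [Group Γ] (l : List (Bool × Γ)) : Γ := (l.map Prod.snd).prod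

lemma piL_nil {Γ : Type*} [Group Γ] : piL ([] : List (Bool × Γ)) = 1 := rfl

lemma piL_cons {Γ : Type*} [Group Γ] (p : Bool × Γ) (l : List (Bool × Γ)) :
    piL (p :: l) = p.2 * piL l := by simp [piL]

lemma piL_append {Γ : Type*} [Group Γ] (l₁ l₂ : List (Bool × Γ)) :
    piL (l₁ ++ l₂) = piL l₁ * piL l₂ := by simp [piL]

/-- generic one-step unfolding of the separating set along a left factor -/
lemma SE_step {a : CoprodI M} (haH : a ∈ H) (y r : CoprodI M) (hrH : r ∈ H) :
    r ∈ SE H ((1 : CoprodI M), true) (a * y, true) ↔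
      ¬(r ∈ SE H ((1 : CoprodI M), true) (a, true) ↔
        a⁻¹ * r ∈ SE H ((1 : CoprodI M), true) (y, true)) := by
  have h1 : r ∈ Ew ((1 : CoprodI M), true) (a * y, true) ↔
      ¬(r ∈ Ew ((1 : CoprodI M), true) (a, true) ↔
        r ∈ Ew ((a : CoprodI M), true) (a * y, true)) :=
    mem_Ew_tri ((a : CoprodI M), true)
  have h2 : r ∈ Ew ((a : CoprodI M), true) (a * y, true) ↔
      a⁻¹ * r ∈ Ew ((1 : CoprodI M), true) (y, true) := by
    have := mem_Ew_smul a (a⁻¹ * r) ((1 : CoprodI M), true) (y, true)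
    rw [mul_inv_cancel_left] at this
    rw [← this]
    simp
  have hrH' : a⁻¹ * r ∈ H := mul_mem (inv_mem haH) hrH
  have e0 : r ∈ SE H ((1 : CoprodI M), true) (a * y, true) ↔
      r ∈ Ew ((1 : CoprodI M), true) (a * y, true) := ⟨fun h => h.1, fun h => ⟨h, hrH⟩⟩
  have e1 : r ∈ SE H ((1 : CoprodI M), true) (a, true) ↔
      r ∈ Ew ((1 : CoprodI M), true) (a, true) := ⟨fun h => h.1, fun h => ⟨h, hrH⟩⟩
  have e2 : a⁻¹ * r ∈ SE H ((1 : CoprodI M), true) (y, true) ↔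
      a⁻¹ * r ∈ Ew ((1 : CoprodI M), true) (y, true) := ⟨fun h => h.1, fun h => ⟨h, hrH'⟩⟩
  rw [e0, h1, e1, e2, h2]

/-- step along a `CC true` element -/
lemma SE_step_c {c : CoprodI M} (hc : c ∈ CC H true) (y : CoprodI M) :
    SE H ((1 : CoprodI M), true) (c * y, true) =
      (fun r => c * r) '' SE H ((1 : CoprodI M), true) (y, true) := by
  obtain ⟨hcH, hce⟩ := hc
  ext r
  constructor
  · intro hr
    have hrH : r ∈ H := hr.2
    have := (SE_step H hcH y r hrH).1 hr
    refine ⟨c⁻¹ * r, ?_, by simp⟩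
    rw [hce] at this
    simp only [Set.mem_empty_iff_false, false_iff, not_not] at this
    exact this
  · rintro ⟨s, hs, rfl⟩
    have hsH : s ∈ H := hs.2
    have hrH : c * s ∈ H := mul_mem hcH hsH
    rw [SE_step H hcH y _ hrH]
    rw [hce]
    simp only [Set.mem_empty_iff_false, false_iff, not_not, inv_mul_cancel_left]
    exact hs

/-- value of SE at the basic edge -/
lemma SE_V1 : SE H ((1 : CoprodI M), true) ((1 : CoprodI M), false) = {1} := by
  ext r
  simp only [mem_SE, mem_Ew_pair (by simp : (true : Bool) ≠ false), Set.mem_singleton_iff]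
  constructor
  · rintro ⟨rfl, _⟩; rfl
  · rintro rfl; exact ⟨rfl, one_mem H⟩

/-- value of SE at a `CC false` element, viewed from `true`-vertices -/
lemma SE_V2 {d : CoprodI M} (hd : d ∈ CC H false) (hd1 : d ≠ 1) :
    SE H ((1 : CoprodI M), true) (d, true) = {1, d} := by
  obtain ⟨hdH, hde⟩ := hd
  ext r
  constructor
  · rintro ⟨hrE, hrH⟩
    have h1 : r ∈ Ew ((1 : CoprodI M), true) ((1 : CoprodI M), false) ↔ r = 1 :=
      mem_Ew_pair (by simp) 1 r
    have h2 : r ∈ Ew ((d : CoprodI M), false) (d, true) ↔ r = d :=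
      mem_Ew_pair (by simp) d r
    have h3 : r ∉ Ew ((1 : CoprodI M), false) (d, false) := by
      intro hcon
      have : r ∈ SE H ((1 : CoprodI M), false) (d, false) := ⟨hcon, hrH⟩
      rw [hde] at this
      exact this
    have h4 := (mem_Ew_tri ((1 : CoprodI M), false)).1 hrE
    have h5 : r ∈ Ew ((1 : CoprodI M), false) (d, true) ↔ r = d := by
      rw [mem_Ew_tri ((d : CoprodI M), false)]
      tauto
    rw [h1, h5] at h4
    simp only [Set.mem_insert_iff, Set.mem_singleton_iff]
    tauto
  · intro hr
    simp only [Set.mem_insert_iff, Set.mem_singleton_iff] at hr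
    have hrH : r ∈ H := by rcases hr with rfl | rfl; exacts [one_mem H, hdH]
    refine ⟨?_, hrH⟩
    have h1 : r ∈ Ew ((1 : CoprodI M), true) ((1 : CoprodI M), false) ↔ r = 1 :=
      mem_Ew_pair (by simp) 1 r
    have h2 : r ∈ Ew ((d : CoprodI M), false) (d, true) ↔ r = d :=
      mem_Ew_pair (by simp) d r
    have h3 : r ∉ Ew ((1 : CoprodI M), false) (d, false) := by
      intro hcon
      have : r ∈ SE H ((1 : CoprodI M), false) (d, false) := ⟨hcon, hrH⟩
      rw [hde] at this
      exact this
    have h5 : r ∈ Ew ((1 : CoprodI M), false) (d, true) ↔ r = d := by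
      rw [mem_Ew_tri ((d : CoprodI M), false)]
      tauto
    rw [mem_Ew_tri ((1 : CoprodI M), false), h1, h5]
    rcases hr with rfl | rfl
    · intro hcon
      exact hd1 (hcon.1 rfl).symm
    · intro hcon
      exact hd1 (hcon.2 rfl)

/-- the predicted set of separating H-edges for an alternating word, case (a) -/
def MFa : List (Bool × CoprodI M) → Set (CoprodI M)
  | [] => ∅
  | (true, c) :: z => (fun r => c * r) '' MFa z
  | (false, d) :: z => {1, d} ∪ (fun r => d * r) '' MFa z

lemma MFa_ext {z : List (Bool × CoprodI M)} {x : CoprodI M} (hx : x ∈ MFa z) :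
    ∃ w p, (w ++ [p]) <+: z ∧ p.1 = false ∧
      (x = piL (w ++ [p]) ∨ x = piL w) := by
  induction z generalizing x with
  | nil => exact absurd hx (by simp [MFa])
  | cons a z ih =>
    obtain ⟨b, xa⟩ := a
    cases b
    · -- false head
      rcases hx with hx | ⟨x', hx', rfl⟩
      · simp only [Set.mem_insert_iff, Set.mem_singleton_iff] at hx
        rcases hx with h | h
        · refine ⟨[], (false, xa), ⟨z, rfl⟩, rfl, Or.inr ?_⟩
          rw [h]; rfl
        · refine ⟨[], (false, xa), ⟨z, rfl⟩, rfl, Or.inl ?_⟩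
          rw [h]; simp [piL]
      · obtain ⟨w, p, ⟨tail, htail⟩, hp, hor⟩ := ih hx'
        refine ⟨(false, xa) :: w, p, ⟨tail, by simp [← htail]⟩, hp, ?_⟩
        rcases hor with rfl | rfl
        · left; rw [List.cons_append, piL_cons]
        · right; rw [piL_cons]
    · -- true head
      obtain ⟨x', hx', rfl⟩ := hx
      obtain ⟨w, p, ⟨tail, htail⟩, hp, hor⟩ := ih hx'
      refine ⟨(true, xa) :: w, p, ⟨tail, by simp [← htail]⟩, hp, ?_⟩
      rcases hor with rfl | rfl
      · left; rw [List.cons_append, piL_cons]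
      · right; rw [piL_cons]

lemma MFa_subH {z : List (Bool × CoprodI M)} (hz : ∀ p ∈ z, p.2 ∈ H) :
    MFa z ⊆ (H : Set (CoprodI M)) := by
  induction z with
  | nil => simp [MFa]
  | cons a z ih =>
    obtain ⟨b, xa⟩ := a
    have hxa : xa ∈ H := hz (b, xa) (by simp)
    have hz' : ∀ p ∈ z, p.2 ∈ H := fun p hp => hz p (by simp [hp])
    cases b
    · rintro x (hx | ⟨x', hx', rfl⟩)
      · rcases hx with rfl | rfl
        · exact one_mem H
        · exact hxa
      · exact mul_mem hxa (ih hz' hx')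
    · rintro x ⟨x', hx', rfl⟩
      exact mul_mem hxa (ih hz' hx')

/-- no `1` in `MFa z` when `z` does not start with a false-tagged letter -/
lemma MFa_no_one {z : List (Bool × CoprodI M)}
    (hsub : ∀ w, w <:+: z → w ≠ [] → piL w ≠ 1)
    (hhead : ∀ p, z.head? = some p → p.1 = true) : (1 : CoprodI M) ∉ MFa z := by
  intro h1
  obtain ⟨w, p, hpre, hp, hor⟩ := MFa_ext h1
  rcases hor with h | h
  · exact hsub _ hpre.isInfix (by simp) h.symm
  · rcases List.eq_nil_or_concat' w with rfl | ⟨w', q, rfl⟩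
    · -- w = [], so z starts with p, false-tagged
      have : z.head? = some p := by
        obtain ⟨tail, htail⟩ := hpre
        rw [← htail]; rfl
      rw [hhead p this] at hp; exact absurd hp (by decide)
    · have hpre' : (w' ++ [q]) <+: z := by
        obtain ⟨tail, htail⟩ := hpre
        exact ⟨[p] ++ tail, by rw [← htail]; simp⟩
      exact hsub _ hpre'.isInfix (by simp) h.symm

/-- the main M-form computation, case (a) -/
lemma Mform_a : ∀ z : List (Bool × CoprodI M),
    (∀ p ∈ z, p.2 ∈ CC H p.1 ∧ p.2 ≠ 1) →
    z.Chain' (fun p q => p.1 ≠ q.1) →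
    (∀ w, w <:+: z → w ≠ [] → piL w ≠ 1) →
    SE H ((1 : CoprodI M), true) (piL z, true) = MFa z := by
  intro z
  induction z with
  | nil =>
    intro _ _ _
    rw [piL_nil]
    ext r
    simp [SE, Ew_self, MFa]
  | cons a z ih =>
    intro hlet hchain hsub
    obtain ⟨b, xa⟩ := a
    have hxa := (hlet (b, xa) (by simp)).1
    have hxa1 := (hlet (b, xa) (by simp)).2
    have hlet' : ∀ p ∈ z, p.2 ∈ CC H p.1 ∧ p.2 ≠ 1 := fun p hp => hlet p (by simp [hp])
    have hchain' : z.Chain' (fun p q => p.1 ≠ q.1) := hchain.tail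
    have hsub' : ∀ w, w <:+: z → w ≠ [] → piL w ≠ 1 := fun w hw => hsub w (List.infix_cons hw)
    have hIH := ih hlet' hchain' hsub'
    rw [piL_cons]
    cases b
    · -- false-tagged head: d := xa
      have hxaH : xa ∈ H := hxa.1
      have hV2 := SE_V2 H hxa hxa1
      have hhead' : ∀ p, z.head? = some p → p.1 = true := by
        intro p hp
        cases z with
        | nil => simp at hp
        | cons q z' =>
          simp only [List.head?_cons, Option.some_inj] at hp
          subst hp
          have := List.isChain_cons_cons.1 hchain
          have h2 : (false, xa).1 ≠ q.1 := this.1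
          by_contra hf
          rw [Bool.not_eq_true] at hf
          exact h2 (by simp [hf])
      have hno1 : (1 : CoprodI M) ∉ MFa z := MFa_no_one hsub' hhead'
      have hnod : xa⁻¹ ∉ MFa z := by
        intro hmem
        obtain ⟨w, p, hpre, hp, hor⟩ := MFa_ext hmem
        rcases hor with h | h
        · have : piL ((false, xa) :: (w ++ [p])) = 1 := by
            rw [piL_cons, ← h]; simp
          obtain ⟨tail, htail⟩ := hpre
          exact hsub ((false, xa) :: (w ++ [p]))
            ⟨[], tail, by rw [← htail]; simp⟩ (by simp) this
        · have : piL ((false, xa) :: w) = 1 := by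
            rw [piL_cons, ← h]; simp
          obtain ⟨tail, htail⟩ := hpre
          exact hsub ((false, xa) :: w)
            ⟨[], [p] ++ tail, by rw [← htail]; simp⟩ (by simp) this
      have hsubH : MFa z ⊆ (H : Set (CoprodI M)) :=
        MFa_subH H (fun p hp => (hlet' p hp).1.1)
      ext r
      show r ∈ SE H ((1 : CoprodI M), true) (xa * piL z, true) ↔
        r ∈ ({1, xa} ∪ (fun r => xa * r) '' MFa z : Set (CoprodI M))
      constructor
      · intro hr
        have hrH : r ∈ H := hr.2
        have := (SE_step H hxaH (piL z) r hrH).1 hr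
        rw [hV2, hIH] at this
        by_cases hcase : r ∈ ({1, xa} : Set (CoprodI M))
        · exact Or.inl hcase
        · right
          have hmem : xa⁻¹ * r ∈ MFa z := by tauto
          exact ⟨xa⁻¹ * r, hmem, by simp⟩
      · intro hr
        have hrH : r ∈ H := by
          rcases hr with hr | ⟨s, hs, rfl⟩
          · rcases hr with rfl | rfl
            exacts [one_mem H, hxaH]
          · exact mul_mem hxaH (hsubH hs)
        rw [SE_step H hxaH (piL z) r hrH, hV2, hIH]
        rcases hr with hr | ⟨s, hs, rfl⟩
        · intro hcon
          have : xa⁻¹ * r ∈ MFa z := hcon.1 hr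
          rcases hr with rfl | rfl
          · rw [mul_one] at this
            exact hnod this
          · rw [inv_mul_cancel] at this
            exact hno1 this
        · intro hcon
          have h2 : xa⁻¹ * (xa * s) ∈ MFa z := by rw [inv_mul_cancel_left]; exact hs
          have h3 : xa * s ∈ ({1, xa} : Set (CoprodI M)) := hcon.2 h2
          simp only [Set.mem_insert_iff, Set.mem_singleton_iff] at h3
          rcases h3 with h3 | h3
          · have hs' : s = xa⁻¹ := eq_inv_of_mul_eq_one_right h3
            rw [hs'] at hs
            exact hnod hs
          · have hs' : s = 1 := mul_left_cancel (a := xa) (by rw [h3, mul_one])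
            rw [hs'] at hs
            exact hno1 hs
    · -- true-tagged head
      rw [SE_step_c H hxa, hIH]
      rfl

/-- injectivity, case (a): alternating words in `CC true ∖ 1` and `CC false ∖ 1`
have nontrivial product. -/
theorem inj_a : ∀ (l : List (Bool × CoprodI M)),
    (∀ p ∈ l, p.2 ∈ CC H p.1 ∧ p.2 ≠ 1) →
    l.Chain' (fun p q => p.1 ≠ q.1) → l ≠ [] → piL l ≠ 1 := by
  suffices haux : ∀ n : ℕ, ∀ l : List (Bool × CoprodI M), l.length ≤ n →
      (∀ p ∈ l, p.2 ∈ CC H p.1 ∧ p.2 ≠ 1) →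
      l.Chain' (fun p q => p.1 ≠ q.1) → l ≠ [] → piL l ≠ 1 by
    intro l h1 h2 h3
    exact haux l.length l le_rfl h1 h2 h3
  intro n
  induction n using Nat.strong_induction_on with
  | _ n ihn =>
    intro l hlen hlet hchain hne hpi
    have hsub' : ∀ w, w <:+: l → w ≠ [] → w.length < l.length → piL w ≠ 1 := by
      intro w hw hwne hwlen
      exact ihn w.length (lt_of_lt_of_le hwlen hlen) w le_rfl
        (fun p hp => hlet p (hw.sublist.mem hp))
        (hchain.infix hw) hwne
    cases l with
    | nil => exact hne rfl
    | cons a z =>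
      obtain ⟨b, xa⟩ := a
      have hxa := (hlet (b, xa) (by simp)).1
      have hxa1 := (hlet (b, xa) (by simp)).2
      have hlet' : ∀ p ∈ z, p.2 ∈ CC H p.1 ∧ p.2 ≠ 1 := fun p hp => hlet p (by simp [hp])
      have hchain' := hchain.tail
      cases hz : z with
      | nil =>
        subst hz
        rw [piL_cons, piL_nil, mul_one] at hpi
        exact hxa1 hpi
      | cons a' z' =>
        have hzne : z ≠ [] := by rw [hz]; simp
        have hzlen : z.length < ((b, xa) :: z).length := by simp
        have hsubz : ∀ w, w <:+: z → w ≠ [] → piL w ≠ 1 := by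
          intro w hw hwne
          refine hsub' w (List.infix_cons hw) hwne ?_
          calc w.length ≤ z.length := hw.length_le
            _ < _ := hzlen
        have hMz := Mform_a H z hlet' hchain' hsubz
        rw [piL_cons] at hpi
        have hSE1 : SE H ((1 : CoprodI M), true) (xa * piL z, true) = ∅ := by
          rw [hpi]
          ext r
          simp [SE, Ew_self]
        cases b
        · -- head false-tagged
          have hxaH : xa ∈ H := hxa.1
          have hd : xa ∈ SE H ((1 : CoprodI M), true) (xa, true) ↔ True := by
            simp only [iff_true]
            rw [SE_V2 H hxa hxa1]
            simp
          have hstep := (SE_step H hxaH (piL z) xa hxaH)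
          have : xa ∉ SE H ((1 : CoprodI M), true) (xa * piL z, true) := by
            rw [hSE1]; simp
          have h1z : (1 : CoprodI M) ∈ MFa z := by
            rw [← hMz]
            have := (not_iff_not.2 hstep).1 this
            simp only [not_not] at this
            have h2 := this.1 (by rw [SE_V2 H hxa hxa1]; simp)
            rwa [inv_mul_cancel] at h2
          have hhead' : ∀ p, z.head? = some p → p.1 = true := by
            intro p hp
            rw [hz] at hp
            simp only [List.head?_cons, Option.some_inj] at hp
            subst hp
            have hch2 : List.Chain' (fun p q => p.1 ≠ q.1) ((false, xa) :: a' :: z') := by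
              rw [← hz]; exact hchain
            have h2 := (List.isChain_cons_cons.1 hch2).1
            by_contra hf
            rw [Bool.not_eq_true] at hf
            exact h2 (by simp [hf])
          exact MFa_no_one hsubz hhead' h1z
        · -- head true-tagged
          rw [SE_step_c H hxa, hMz] at hSE1
          have hMFz : MFa z = ∅ := by
            ext r
            constructor
            · intro hr
              have : xa * r ∈ (fun r => xa * r) '' MFa z := ⟨r, hr, rfl⟩
              rw [hSE1] at this
              exact this
            · simp
          -- but z starts with a false-tagged letter, so MFa z is nonempty
          rw [hz] at hMFz
          have hfalse : a'.1 = false := by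
            have hch2 : List.Chain' (fun p q => p.1 ≠ q.1) ((true, xa) :: a' :: z') := by
              rw [← hz]; exact hchain
            have h2 := (List.isChain_cons_cons.1 hch2).1
            by_contra hf
            rw [Bool.not_eq_false] at hf
            exact h2 (by simp [hf])
          obtain ⟨b', xa'⟩ := a'
          simp only at hfalse
          subst hfalse
          have : (1 : CoprodI M) ∈ MFa ((false, xa') :: z') := Or.inl (Or.inl rfl)
          rw [hMFz] at this
          exact this

/- ### case (b) : t ∈ TT -/

lemma SE_V3 {t : CoprodI M} (ht : t ∈ TT H) :
    SE H ((1 : CoprodI M), true) (t, true) = {t} := by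
  obtain ⟨htH, hte⟩ := ht
  ext r
  constructor
  · rintro ⟨hrE, hrH⟩
    have h2 : r ∈ Ew ((t : CoprodI M), false) (t, true) ↔ r = t :=
      mem_Ew_pair (by simp) t r
    have h3 : r ∉ Ew ((1 : CoprodI M), true) (t, false) := by
      intro hcon
      have : r ∈ SE H ((1 : CoprodI M), true) (t, false) := ⟨hcon, hrH⟩
      rw [hte] at this
      exact this
    have h4 := (mem_Ew_tri ((t : CoprodI M), false)).1 hrE
    simp only [Set.mem_singleton_iff]
    tauto
  · intro hr
    simp only [Set.mem_singleton_iff] at hr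
    rw [hr]
    refine ⟨?_, htH⟩
    have h2 : t ∈ Ew ((t : CoprodI M), false) (t, true) ↔ t = t :=
      mem_Ew_pair (by simp) t t
    have h3 : t ∉ Ew ((1 : CoprodI M), true) (t, false) := by
      intro hcon
      have : t ∈ SE H ((1 : CoprodI M), true) (t, false) := ⟨hcon, htH⟩
      rw [hte] at this
      exact this
    rw [mem_Ew_tri ((t : CoprodI M), false)]
    tauto

lemma SE_V4 {t : CoprodI M} (ht : t ∈ TT H) :
    SE H ((1 : CoprodI M), true) (t⁻¹, true) = {1} := by
  have htH : t ∈ H := ht.1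
  have h := SE_translate H htH true 1
  rw [mul_one] at h
  rw [h, SE_symm H ((t : CoprodI M), true) ((1 : CoprodI M), true), SE_V3 H ht]
  ext r
  constructor
  · rintro ⟨s, hs, rfl⟩
    simp only [Set.mem_singleton_iff] at hs
    rw [hs]; simp
  · intro hr
    simp only [Set.mem_singleton_iff] at hr
    rw [hr]
    exact ⟨t, rfl, by simp⟩

lemma TT_ne_one {t : CoprodI M} (ht : t ∈ TT H) : t ≠ 1 := by
  rintro rfl
  have h1 := ht.2
  rw [SE_V1 H] at h1
  simp at h1

lemma TT_ne_inv {t : CoprodI M} (ht : t ∈ TT H) : t⁻¹ ≠ t := by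
  intro hcon
  have h3 := SE_V3 H ht
  have h4 := SE_V4 H ht
  rw [hcon, h3] at h4
  have : t = 1 := by
    have : t ∈ ({1} : Set (CoprodI M)) := by rw [← h4]; rfl
    simpa using this
  exact TT_ne_one H ht this

/-- shape of letters in case (b) -/
def ShB (t : CoprodI M) (p : Bool × CoprodI M) : Prop :=
  (p.1 = true → p.2 ∈ CC H true ∧ p.2 ≠ 1) ∧ (p.1 = false → p.2 = t ∨ p.2 = t⁻¹)

/-- adjacency constraint in case (b): no two adjacent `CC`-letters,
no adjacent `t`, `t⁻¹`. -/
def Rb : (Bool × CoprodI M) → (Bool × CoprodI M) → Prop :=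
  fun p q => (p.1 = true → q.1 = false) ∧ (p.1 = false → q.1 = false → p.2 = q.2)

/-- predicted separating set, case (b) -/
def MFb : List (Bool × CoprodI M) → Set (CoprodI M)
  | [] => ∅
  | (_, x) :: z => SE H ((1 : CoprodI M), true) (x, true) ∪ (fun r => x * r) '' MFb z

lemma MFb_ext {t : CoprodI M} (ht : t ∈ TT H) {z : List (Bool × CoprodI M)}
    (hsh : ∀ p ∈ z, ShB H t p) {x : CoprodI M} (hx : x ∈ MFb H z) :
    ∃ w p, (w ++ [p]) <+: z ∧ p.1 = false ∧
      ((p.2 = t ∧ x = piL (w ++ [p])) ∨ (p.2 = t⁻¹ ∧ x = piL w)) := by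
  induction z generalizing x with
  | nil => exact absurd hx (by simp [MFb])
  | cons a z ih =>
    obtain ⟨b, xa⟩ := a
    have hsh' : ∀ p ∈ z, ShB H t p := fun p hp => hsh p (by simp [hp])
    rcases hx with hx | ⟨x', hx', rfl⟩
    · -- x in the head's basic value set
      cases b
      · rcases (hsh (false, xa) (by simp)).2 rfl with h | h
        · have h' : xa = t := h
          have hx' : x = t := by
            rw [h'] at hx
            rw [SE_V3 H ht] at hx
            simpa using hx
          refine ⟨[], (false, xa), ⟨z, rfl⟩, rfl, Or.inl ⟨h, ?_⟩⟩
          rw [hx', ← h']; simp [piL]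
        · have h' : xa = t⁻¹ := h
          have hx' : x = 1 := by
            rw [h'] at hx
            rw [SE_V4 H ht] at hx
            simpa using hx
          refine ⟨[], (false, xa), ⟨z, rfl⟩, rfl, Or.inr ⟨h, ?_⟩⟩
          rw [hx']; rfl
      · have hc := (hsh (true, xa) (by simp)).1 rfl
        have : SE H ((1 : CoprodI M), true) (xa, true) = ∅ := hc.1.2
        rw [this] at hx
        exact absurd hx (by simp)
    · obtain ⟨w, p, ⟨tail, htail⟩, hp, hor⟩ := ih hsh' hx'
      refine ⟨(b, xa) :: w, p, ⟨tail, by simp [← htail]⟩, hp, ?_⟩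
      rcases hor with ⟨h1, rfl⟩ | ⟨h1, rfl⟩
      · left; exact ⟨h1, by rw [List.cons_append, piL_cons]⟩
      · right; exact ⟨h1, by rw [piL_cons]⟩

lemma MFb_subH {t : CoprodI M} (ht : t ∈ TT H) {z : List (Bool × CoprodI M)}
    (hsh : ∀ p ∈ z, ShB H t p) : MFb H z ⊆ (H : Set (CoprodI M)) := by
  induction z with
  | nil => simp [MFb]
  | cons a z ih =>
    obtain ⟨b, xa⟩ := a
    have hsh' : ∀ p ∈ z, ShB H t p := fun p hp => hsh p (by simp [hp])
    have hxaH : xa ∈ H := by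
      cases b
      · rcases (hsh (false, xa) (by simp)).2 rfl with h | h
        · have h' : xa = t := h
          rw [h']; exact ht.1
        · have h' : xa = t⁻¹ := h
          rw [h']; exact inv_mem ht.1
      · exact ((hsh (true, xa) (by simp)).1 rfl).1.1
    rintro x (hx | ⟨x', hx', rfl⟩)
    · exact hx.2
    · exact mul_mem hxaH (ih hsh' hx')

/-- `1 ∉ MFb z` when `z` does not start with `(false, t⁻¹)` -/
lemma MFb_no_one {t : CoprodI M} (ht : t ∈ TT H) {z : List (Bool × CoprodI M)}
    (hsh : ∀ p ∈ z, ShB H t p)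
    (hsub : ∀ w, w <:+: z → w ≠ [] → piL w ≠ 1)
    (hhead : z.head? ≠ some (false, t⁻¹)) : (1 : CoprodI M) ∉ MFb H z := by
  intro h1
  obtain ⟨w, p, hpre, hp, hor⟩ := MFb_ext H ht hsh h1
  rcases hor with ⟨h1', h⟩ | ⟨h1', h⟩
  · exact hsub _ hpre.isInfix (by simp) h.symm
  · rcases List.eq_nil_or_concat' w with rfl | ⟨w', q, rfl⟩
    · apply hhead
      obtain ⟨tail, htail⟩ := hpre
      have hpp : p = (false, t⁻¹) := by
        obtain ⟨pb, px⟩ := p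
        simp only at hp h1'
        rw [hp, h1']
      rw [← htail, hpp]; rfl
    · have hpre' : (w' ++ [q]) <+: z := by
        obtain ⟨tail, htail⟩ := hpre
        exact ⟨[p] ++ tail, by rw [← htail]; simp⟩
      exact hsub _ hpre'.isInfix (by simp) h.symm

/-- `t ∉ MFb z` when `z` does not start with `(false, t)` and infix products of the
word `z` itself are nontrivial -/
lemma MFb_no_t {t : CoprodI M} (ht : t ∈ TT H) {z : List (Bool × CoprodI M)}
    (hsh : ∀ p ∈ z, ShB H t p)
    (hsub : ∀ w, w <:+: z → w ≠ [] → piL w ≠ 1)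
    (hhead : z.head? ≠ some (false, t)) : t ∉ MFb H z := by
  intro hmem
  obtain ⟨w, p, hpre, hp, hor⟩ := MFb_ext H ht hsh hmem
  rcases hor with ⟨h1', h⟩ | ⟨h1', h⟩
  · -- t = piL (w ++ [p]), p.2 = t : then piL w = 1
    have hw1 : piL w = 1 := by
      have : piL (w ++ [p]) = piL w * t := by
        rw [piL_append]
        simp [piL, h1']
      rw [this] at h
      exact mul_right_cancel (by rw [← h, one_mul])
    rcases em (w = []) with rfl | hwne
    · apply hhead
      obtain ⟨tail, htail⟩ := hpre
      have hpp : p = (false, t) := by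
        obtain ⟨pb, px⟩ := p
        simp only at hp h1'
        rw [hp, h1']
      rw [← htail, hpp]; rfl
    · have hwpre : w <+: z := (List.prefix_append w [p]).trans hpre
      exact hsub w hwpre.isInfix hwne hw1
  · -- t = piL w, p.2 = t⁻¹ : then piL (w ++ [p]) = 1
    have hw1 : piL (w ++ [p]) = 1 := by
      rw [piL_append, ← h]
      simp [piL, h1']
    exact hsub _ hpre.isInfix (by simp) hw1

/-- singleton-value step helper -/
lemma SE_step_singleton {xa v : CoprodI M} (hxaH : xa ∈ H) (hvH : v ∈ H)
    (z : Set (CoprodI M)) (hzH : z ⊆ (H : Set (CoprodI M)))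
    (hV : SE H ((1 : CoprodI M), true) (xa, true) = {v})
    (y : CoprodI M) (hy : SE H ((1 : CoprodI M), true) (y, true) = z)
    (hA1 : xa⁻¹ * v ∉ z) (hA2 : ∀ m ∈ z, xa * m ≠ v) :
    SE H ((1 : CoprodI M), true) (xa * y, true) = {v} ∪ (fun r => xa * r) '' z := by
  ext r
  constructor
  · intro hr
    have hrH : r ∈ H := hr.2
    have hiff := (SE_step H hxaH y r hrH).1 hr
    rw [hV, hy] at hiff
    by_cases hrv : r = v
    · exact Or.inl hrv
    · right
      have : xa⁻¹ * r ∈ z := by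
        by_contra hcon
        apply hiff
        constructor
        · intro h; exact absurd h hrv
        · intro h; exact absurd h hcon
      exact ⟨xa⁻¹ * r, this, by simp⟩
  · intro hr
    have hrH : r ∈ H := by
      rcases hr with hr | ⟨m, hm, rfl⟩
      · rw [hr]; exact hvH
      · exact mul_mem hxaH (hzH hm)
    rw [SE_step H hxaH y r hrH, hV, hy]
    rcases hr with hr | ⟨m, hm, rfl⟩
    · intro hcon
      rw [hr] at hcon
      exact hA1 (hcon.1 rfl)
    · intro hcon
      have h2 : xa⁻¹ * (xa * m) ∈ z := by rw [inv_mul_cancel_left]; exact hm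
      exact hA2 m hm (hcon.2 h2)

lemma chain_head_false {xa : CoprodI M} {z : List (Bool × CoprodI M)}
    (hchain : ((false, xa) :: z).Chain' Rb) {y : CoprodI M}
    (hcon : z.head? = some (false, y)) : xa = y := by
  cases z with
  | nil => simp at hcon
  | cons q z' =>
    simp only [List.head?_cons, Option.some_inj] at hcon
    have h2 := (List.isChain_cons_cons.1 hchain).1
    have := h2.2 rfl (by rw [hcon])
    rw [hcon] at this
    exact this

lemma Mform_b {t : CoprodI M} (ht : t ∈ TT H) : ∀ z : List (Bool × CoprodI M),
    (∀ p ∈ z, ShB H t p) → z.Chain' Rb →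
    (∀ w, w <:+: z → w ≠ [] → piL w ≠ 1) →
    SE H ((1 : CoprodI M), true) (piL z, true) = MFb H z := by
  intro z
  induction z with
  | nil =>
    intro _ _ _
    rw [piL_nil]
    ext r
    simp [SE, Ew_self, MFb]
  | cons a z ih =>
    intro hsh hchain hsub
    obtain ⟨b, xa⟩ := a
    have hsh' : ∀ p ∈ z, ShB H t p := fun p hp => hsh p (by simp [hp])
    have hchain' : z.Chain' Rb := hchain.tail
    have hsub' : ∀ w, w <:+: z → w ≠ [] → piL w ≠ 1 :=
      fun w hw => hsub w (List.infix_cons hw)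
    have hIH := ih hsh' hchain' hsub'
    have hsubH : MFb H z ⊆ (H : Set (CoprodI M)) := MFb_subH H ht hsh'
    rw [piL_cons]
    cases b
    · -- false-tagged
      rcases (hsh (false, xa) (by simp)).2 rfl with h | h
      · -- xa = t
        have h' : xa = t := h
        have hhead : z.head? ≠ some (false, t⁻¹) := by
          intro hcon
          have := chain_head_false hchain hcon
          rw [h'] at this
          exact TT_ne_inv H ht this.symm
        have hno1 : (1 : CoprodI M) ∉ MFb H z := MFb_no_one H ht hsh' hsub' hhead
        have hstep := SE_step_singleton H (show xa ∈ H by rw [h']; exact ht.1)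
          (show t ∈ H from ht.1) (MFb H z) hsubH
          (by rw [h']; exact SE_V3 H ht) (piL z) hIH
          (by rw [h', inv_mul_cancel]; exact hno1)
          (by
            intro m hm hcon
            rw [h'] at hcon
            have hm1 : m = 1 := mul_eq_left.mp hcon
            rw [hm1] at hm
            exact hno1 hm)
        rw [hstep]
        show _ = SE H ((1 : CoprodI M), true) (xa, true) ∪ _
        rw [h', SE_V3 H ht]
      · -- xa = t⁻¹
        have h' : xa = t⁻¹ := h
        have hhead : z.head? ≠ some (false, t) := by
          intro hcon
          have := chain_head_false hchain hcon
          rw [h'] at this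
          exact TT_ne_inv H ht this
        have hnot : t ∉ MFb H z := MFb_no_t H ht hsh' hsub' hhead
        have hstep := SE_step_singleton H (show xa ∈ H by rw [h']; exact inv_mem ht.1)
          (one_mem H) (MFb H z) hsubH
          (by rw [h']; exact SE_V4 H ht) (piL z) hIH
          (by rw [h', inv_inv, mul_one]; exact hnot)
          (by
            intro m hm hcon
            rw [h'] at hcon
            have hm1 : m = t := (inv_mul_eq_one.mp hcon).symm
            rw [hm1] at hm
            exact hnot hm)
        rw [hstep]
        show _ = SE H ((1 : CoprodI M), true) (xa, true) ∪ _
        rw [h', SE_V4 H ht]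
    · -- true-tagged
      have hc := (hsh (true, xa) (by simp)).1 rfl
      rw [SE_step_c H hc.1, hIH]
      show _ = SE H ((1 : CoprodI M), true) (xa, true) ∪ _
      rw [hc.1.2]
      simp

theorem inj_b {t : CoprodI M} (ht : t ∈ TT H) : ∀ (l : List (Bool × CoprodI M)),
    (∀ p ∈ l, ShB H t p) → l.Chain' Rb → l ≠ [] → piL l ≠ 1 := by
  suffices haux : ∀ n : ℕ, ∀ l : List (Bool × CoprodI M), l.length ≤ n →
      (∀ p ∈ l, ShB H t p) → l.Chain' Rb → l ≠ [] → piL l ≠ 1 by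
    intro l h1 h2 h3
    exact haux l.length l le_rfl h1 h2 h3
  intro n
  induction n using Nat.strong_induction_on with
  | _ n ihn =>
    intro l hlen hsh hchain hne hpi
    have hsub' : ∀ w, w <:+: l → w ≠ [] → w.length < l.length → piL w ≠ 1 := by
      intro w hw hwne hwlen
      exact ihn w.length (lt_of_lt_of_le hwlen hlen) w le_rfl
        (fun p hp => hsh p (hw.sublist.mem hp))
        (hchain.infix hw) hwne
    cases l with
    | nil => exact hne rfl
    | cons a z =>
      obtain ⟨b, xa⟩ := a
      have hsh' : ∀ p ∈ z, ShB H t p := fun p hp => hsh p (by simp [hp])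
      have hchain' : z.Chain' Rb := hchain.tail
      rw [piL_cons] at hpi
      have hSE1 : SE H ((1 : CoprodI M), true) (xa * piL z, true) = ∅ := by
        rw [hpi]
        ext r
        simp [SE, Ew_self]
      cases hz : z with
      | nil =>
        subst hz
        rw [piL_nil, mul_one] at hpi
        cases b
        · rcases (hsh (false, xa) (by simp)).2 rfl with h | h
          · exact TT_ne_one H ht (by rw [← h]; exact hpi)
          · have h' : xa = t⁻¹ := h
            rw [h', inv_eq_one] at hpi
            exact TT_ne_one H ht hpi
        · exact ((hsh (true, xa) (by simp)).1 rfl).2 hpi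
      | cons a' z' =>
        have hzne : z ≠ [] := by rw [hz]; simp
        have hzlen : z.length < ((b, xa) :: z).length := by simp
        have hsubz : ∀ w, w <:+: z → w ≠ [] → piL w ≠ 1 := by
          intro w hw hwne
          refine hsub' w (List.infix_cons hw) hwne ?_
          calc w.length ≤ z.length := hw.length_le
            _ < _ := hzlen
        have hMz := Mform_b H ht z hsh' hchain' hsubz
        cases b
        · -- head false-tagged
          rcases (hsh (false, xa) (by simp)).2 rfl with h | h
          · -- xa = t : evaluate at r = t
            have h' : xa = t := h
            have hstep := SE_step H (show xa ∈ H by rw [h']; exact ht.1) (piL z) t ht.1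
            have hnotin : t ∉ SE H ((1 : CoprodI M), true) (xa * piL z, true) := by
              rw [hSE1]; simp
            have h1z : (1 : CoprodI M) ∈ MFb H z := by
              rw [← hMz]
              have h2 := (not_iff_not.2 hstep).1 hnotin
              simp only [not_not] at h2
              have h3 := h2.1 (by rw [h', SE_V3 H ht]; rfl)
              rw [h'] at h3
              rwa [inv_mul_cancel] at h3
            have hhead : z.head? ≠ some (false, t⁻¹) := by
              intro hcon
              have hch : ((false, xa) :: z).Chain' Rb := hchain
              have := chain_head_false hch hcon
              rw [h'] at this
              exact TT_ne_inv H ht this.symm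
            exact MFb_no_one H ht hsh' hsubz hhead h1z
          · -- xa = t⁻¹ : evaluate at r = 1
            have h' : xa = t⁻¹ := h
            have hstep := SE_step H (show xa ∈ H by rw [h']; exact inv_mem ht.1) (piL z)
              1 (one_mem H)
            have hnotin : (1 : CoprodI M) ∉
                SE H ((1 : CoprodI M), true) (xa * piL z, true) := by
              rw [hSE1]; simp
            have htz : t ∈ MFb H z := by
              rw [← hMz]
              have h2 := (not_iff_not.2 hstep).1 hnotin
              simp only [not_not] at h2
              have h3 := h2.1 (by rw [h', SE_V4 H ht]; rfl)
              rw [h'] at h3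
              rwa [inv_inv, mul_one] at h3
            have hhead : z.head? ≠ some (false, t) := by
              intro hcon
              have hch : ((false, xa) :: z).Chain' Rb := hchain
              have := chain_head_false hch hcon
              rw [h'] at this
              exact TT_ne_inv H ht this
            exact MFb_no_t H ht hsh' hsubz hhead htz
        · -- head true-tagged
          have hc := (hsh (true, xa) (by simp)).1 rfl
          rw [SE_step_c H hc.1, hMz] at hSE1
          have hMFz : MFb H z = ∅ := by
            ext r
            constructor
            · intro hr
              have : xa * r ∈ (fun r => xa * r) '' MFb H z := ⟨r, hr, rfl⟩
              rw [hSE1] at this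
              exact this
            · simp
          rw [hz] at hMFz
          obtain ⟨b', xa'⟩ := a'
          have hb' : b' = false := by
            have hch2 : List.Chain' Rb ((true, xa) :: (b', xa') :: z') := by
              rw [← hz]; exact hchain
            exact (List.isChain_cons_cons.1 hch2).1.1 rfl
          subst hb'
          rcases (hsh (false, xa') (by rw [hz]; simp)).2 rfl with h | h
          · have h' : xa' = t := h
            have : t ∈ MFb H ((false, xa') :: z') := by
              show t ∈ SE H ((1 : CoprodI M), true) (xa', true) ∪ _
              left
              rw [h', SE_V3 H ht]
              rfl
            rw [hMFz] at this
            exact this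
          · have h' : xa' = t⁻¹ := h
            have : (1 : CoprodI M) ∈ MFb H ((false, xa') :: z') := by
              show _ ∈ SE H ((1 : CoprodI M), true) (xa', true) ∪ _
              left
              rw [h', SE_V4 H ht]
              rfl
            rw [hMFz] at this
            exact this

/- ### conjugation lemmas for the HNN-type case -/

lemma Ew_sub_union {q : CoprodI M} {u v w : CoprodI M × Bool}
    (h : q ∈ Ew u w) : q ∈ Ew u v ∨ q ∈ Ew v w := by
  by_contra hcon
  push_neg at hcon
  rw [mem_Ew_tri v] at h
  tauto

lemma SE_inv_t {t : CoprodI M} (ht : t ∈ TT H) :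
    SE H ((1 : CoprodI M), false) (t⁻¹, true) = ∅ := by
  have h1 : SE H ((t : CoprodI M), false) ((1 : CoprodI M), true) = ∅ := by
    rw [SE_symm]; exact ht.2
  have := (SE_smul_empty H (inv_mem ht.1) ((t : CoprodI M), false) ((1 : CoprodI M), true)).2 h1
  simpa using this

lemma conj_mem_CC {t h : CoprodI M} (ht : t ∈ TT H) (hh : h ∈ CC H false) :
    t * h * t⁻¹ ∈ CC H true := by
  refine ⟨mul_mem (mul_mem ht.1 hh.1) (inv_mem ht.1), ?_⟩
  ext r
  simp only [Set.mem_empty_iff_false, iff_false]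
  rintro ⟨hrE, hrH⟩
  -- pieces
  have hP1 : r ∉ Ew ((1 : CoprodI M), true) (t, false) := by
    intro hcon
    have : r ∈ SE H ((1 : CoprodI M), true) (t, false) := ⟨hcon, hrH⟩
    rw [ht.2] at this; exact this
  have hP2 : r ∉ Ew ((t : CoprodI M), false) (t * h, false) := by
    intro hcon
    have h2 : SE H ((t : CoprodI M), false) (t * h, false) = ∅ := by
      have := (SE_smul_empty H ht.1 ((1 : CoprodI M), false) (h, false)).2 hh.2
      simpa using this
    have : r ∈ SE H ((t : CoprodI M), false) (t * h, false) := ⟨hcon, hrH⟩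
    rw [h2] at this; exact this
  have hP3 : r ∉ Ew ((t * h : CoprodI M), false) (t * h * t⁻¹, true) := by
    intro hcon
    have h3 : SE H ((t * h : CoprodI M), false) (t * h * t⁻¹, true) = ∅ := by
      have h4 := SE_inv_t H ht
      have := (SE_smul_empty H (mul_mem ht.1 hh.1) ((1 : CoprodI M), false)
        (t⁻¹, true)).2 h4
      simpa using this
    have : r ∈ SE H ((t * h : CoprodI M), false) (t * h * t⁻¹, true) := ⟨hcon, hrH⟩
    rw [h3] at this; exact this
  rcases Ew_sub_union (v := ((t : CoprodI M), false)) hrE with h1 | h1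
  · exact hP1 h1
  rcases Ew_sub_union (v := ((t * h : CoprodI M), false)) h1 with h2 | h2
  · exact hP2 h2
  · exact hP3 h2

lemma TT_mul_inv_mem_CC {t t' : CoprodI M} (ht : t ∈ TT H) (ht' : t' ∈ TT H) :
    t' * t⁻¹ ∈ CC H true := by
  refine ⟨mul_mem ht'.1 (inv_mem ht.1), ?_⟩
  ext r
  simp only [Set.mem_empty_iff_false, iff_false]
  rintro ⟨hrE, hrH⟩
  have hP1 : r ∉ Ew ((1 : CoprodI M), true) (t', false) := by
    intro hcon
    have : r ∈ SE H ((1 : CoprodI M), true) (t', false) := ⟨hcon, hrH⟩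
    rw [ht'.2] at this; exact this
  have hP2 : r ∉ Ew ((t' : CoprodI M), false) (t' * t⁻¹, true) := by
    intro hcon
    have h3 : SE H ((t' : CoprodI M), false) (t' * t⁻¹, true) = ∅ := by
      have h4 := SE_inv_t H ht
      have := (SE_smul_empty H ht'.1 ((1 : CoprodI M), false) (t⁻¹, true)).2 h4
      simpa using this
    have : r ∈ SE H ((t' : CoprodI M), false) (t' * t⁻¹, true) := ⟨hcon, hrH⟩
    rw [h3] at this; exact this
  rcases Ew_sub_union (v := ((t' : CoprodI M), false)) hrE with h1 | h1
  · exact hP1 h1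
  · exact hP2 h1

/-- base letters are in the vertex groups -/
lemma of_mem_CC_true {a : M true} (haH : of a ∈ H) : (of a : CoprodI M) ∈ CC H true := by
  refine ⟨haH, ?_⟩
  ext r
  simp only [Set.mem_empty_iff_false, iff_false]
  rintro ⟨hrE, _⟩
  apply hrE
  show phi r ((1 : CoprodI M), true) = phi r (of a, true)
  have := phi_coset r (1 : CoprodI M) a
  rw [one_mul] at this
  rw [this]

lemma of_mem_CC_false {b : M false} (hbH : of b ∈ H) : (of b : CoprodI M) ∈ CC H false := by
  refine ⟨hbH, ?_⟩
  ext r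
  simp only [Set.mem_empty_iff_false, iff_false]
  rintro ⟨hrE, _⟩
  apply hrE
  show phi r ((1 : CoprodI M), false) = phi r (of b, false)
  have := phi_coset r (1 : CoprodI M) b
  rw [one_mul] at this
  rw [this]

end FPK

namespace FPK
open Monoid Monoid.CoprodI

/- ### the two-factor family and the bridge to `Monoid.Coprod` -/

abbrev J2 (X Y : Type u) : Bool → Type u := fun b => Bool.rec Y X b

instance J2.instGroup {X Y : Type u} [Group X] [Group Y] : ∀ b, Group (J2 X Y b) :=
  fun b => Bool.rec (inferInstanceAs (Group Y)) (inferInstanceAs (Group X)) b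

/-- the forward map -/
noncomputable def bridgeF (X Y : Type u) [Group X] [Group Y] :
    CoprodI (J2 X Y) →* Monoid.Coprod X Y :=
  CoprodI.lift (fun b => Bool.rec (motive := fun b => J2 X Y b →* Monoid.Coprod X Y)
    Monoid.Coprod.inr Monoid.Coprod.inl b)

noncomputable def bridgeG (X Y : Type u) [Group X] [Group Y] :
    Monoid.Coprod X Y →* CoprodI (J2 X Y) :=
  Monoid.Coprod.lift (CoprodI.of (M := J2 X Y) (i := true)) (CoprodI.of (M := J2 X Y) (i := false))

noncomputable def bridge (X Y : Type u) [Group X] [Group Y] :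
    CoprodI (J2 X Y) ≃* Monoid.Coprod X Y := by
  refine MonoidHom.toMulEquiv (bridgeF X Y) (bridgeG X Y) ?_ ?_
  · apply CoprodI.ext_hom
    intro i
    ext m
    cases i
    · show bridgeG X Y (bridgeF X Y (CoprodI.of m)) = CoprodI.of m
      rw [bridgeF, CoprodI.lift_of]
      show bridgeG X Y (Monoid.Coprod.inr m) = _
      rw [bridgeG, Monoid.Coprod.lift_apply_inr]
    · show bridgeG X Y (bridgeF X Y (CoprodI.of m)) = CoprodI.of m
      rw [bridgeF, CoprodI.lift_of]
      show bridgeG X Y (Monoid.Coprod.inl m) = _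
      rw [bridgeG, Monoid.Coprod.lift_apply_inl]
  · apply Monoid.Coprod.hom_ext
    · ext x
      show bridgeF X Y (bridgeG X Y (Monoid.Coprod.inl x)) = Monoid.Coprod.inl x
      rw [bridgeG, Monoid.Coprod.lift_apply_inl]
      show bridgeF X Y (CoprodI.of (i := true) x) = _
      rw [bridgeF, CoprodI.lift_of]
    · ext y
      show bridgeF X Y (bridgeG X Y (Monoid.Coprod.inr y)) = Monoid.Coprod.inr y
      rw [bridgeG, Monoid.Coprod.lift_apply_inr]
      show bridgeF X Y (CoprodI.of (i := false) y) = _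
      rw [bridgeF, CoprodI.lift_of]

/-- transport of decomposability along a group isomorphism -/
lemma Decomposable.of_mulEquiv {A : Type u} {B : Type u} [Group A] [Group B]
    (e : A ≃* B) (hB : Decomposable B) : Decomposable A := by
  obtain ⟨K, L, _, _, hK, hL, ⟨f⟩⟩ := hB
  exact ⟨K, L, _, _, hK, hL, ⟨e.trans f⟩⟩

/-- decomposability from a pair of subgroups that generate and satisfy
the universal injectivity -/
lemma decomposable_of_pair {P : Type u} [Group P] (A B HH : Subgroup P)
    (hgen : A ⊔ B = HH)
    (hinj : Function.Injective
      (CoprodI.lift (fun b => Bool.rec (motive := fun b => J2 ↥A ↥B b →* P)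
        B.subtype A.subtype b)))
    (hA : Nontrivial ↥A) (hB : Nontrivial ↥B) : Decomposable ↥HH := by
  set f : ∀ b, J2 ↥A ↥B b →* P :=
    fun b => Bool.rec (motive := fun b => J2 ↥A ↥B b →* P) B.subtype A.subtype b with hf
  have hrange : (CoprodI.lift f).range = HH := by
    rw [CoprodI.range_eq_iSup, iSup_bool_eq]
    show (f true).range ⊔ (f false).range = HH
    rw [hf]
    show A.subtype.range ⊔ B.subtype.range = HH
    rw [Subgroup.range_subtype, Subgroup.range_subtype, hgen]
  refine ⟨↥A, ↥B, inferInstance, inferInstance, hA, hB, ⟨?_⟩⟩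
  have e1 : CoprodI (J2 ↥A ↥B) ≃* (CoprodI.lift f).range := MonoidHom.ofInjective hinj
  have e2 : ((CoprodI.lift f).range : Subgroup P) ≃* HH := MulEquiv.subgroupCongr hrange
  exact ((e2.symm.trans e1.symm).trans (bridge ↥A ↥B))

end FPK
namespace FPK
open Monoid Monoid.CoprodI

section Flatten
variable {M : Bool → Type*} [∀ i, Group (M i)] [∀ i, DecidableEq (M i)]

lemma Rb_of_ne_tags {x y : Bool × CoprodI M} (h : x.1 ≠ y.1) : Rb x y := by
  constructor
  · intro hx
    by_contra hy
    rw [Bool.not_eq_false] at hy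
    exact h (hx.trans hy.symm)
  · intro hx hy
    exact absurd (hx.trans hy.symm) h

lemma Rb_self_false (x : CoprodI M) : Rb ((false : Bool), x) ((false : Bool), x) := by
  constructor
  · intro h; exact absurd h (by simp)
  · intro _ _; rfl

lemma chain'_replicate_self {α : Type*} {R : α → α → Prop} {a : α} (h : R a a) :
    ∀ n : ℕ, List.Chain' R (List.replicate n a) := by
  intro n
  induction n with
  | zero => exact List.isChain_nil
  | succ n ih =>
    rw [List.replicate_succ]
    refine List.isChain_cons.2 ⟨?_, ih⟩
    intro y hy
    rw [List.eq_of_mem_replicate (List.mem_of_mem_head? hy)]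
    exact h

lemma piL_replicate (n : ℕ) (x : CoprodI M) :
    piL (List.replicate n ((false : Bool), x)) = x ^ n := by
  induction n with
  | zero => simp [piL]
  | succ n ih =>
    rw [List.replicate_succ, piL_cons, ih, pow_succ']

def tblock (t : CoprodI M) (k : ℤ) : List (Bool × CoprodI M) :=
  if 0 ≤ k then List.replicate k.toNat ((false : Bool), t)
  else List.replicate (-k).toNat ((false : Bool), t⁻¹)

lemma tblock_piL (t : CoprodI M) (k : ℤ) : piL (tblock t k) = t ^ k := by
  unfold tblock
  split
  · rename_i h
    rw [piL_replicate, ← zpow_natCast, Int.toNat_of_nonneg h]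
  · rename_i h
    push_neg at h
    rw [piL_replicate, ← zpow_natCast, Int.toNat_of_nonneg (by omega : (0:ℤ) ≤ -k),
      inv_zpow, ← zpow_neg, neg_neg]

lemma tblock_mem {t : CoprodI M} {k : ℤ} {p : Bool × CoprodI M} (hp : p ∈ tblock t k) :
    p = ((false : Bool), t) ∨ p = ((false : Bool), t⁻¹) := by
  unfold tblock at hp
  split at hp
  · exact Or.inl (List.eq_of_mem_replicate hp)
  · exact Or.inr (List.eq_of_mem_replicate hp)

lemma tblock_ne_nil {t : CoprodI M} {k : ℤ} (hk : k ≠ 0) : tblock t k ≠ [] := by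
  unfold tblock
  split <;> rename_i h
  · simp only [ne_eq, List.replicate_eq_nil_iff]
    omega
  · simp only [ne_eq, List.replicate_eq_nil_iff]
    omega

lemma tblock_chain (t : CoprodI M) (k : ℤ) : (tblock t k).Chain' Rb := by
  unfold tblock
  split
  · exact chain'_replicate_self (Rb_self_false t) _
  · exact chain'_replicate_self (Rb_self_false t⁻¹) _

open scoped Classical in
noncomputable def expo (t x : CoprodI M) : ℤ :=
  if h : ∃ k : ℤ, t ^ k = x then Classical.choose h else 0

lemma expo_spec {t x : CoprodI M} (h : x ∈ Subgroup.zpowers t) : t ^ expo t x = x := by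
  have h' : ∃ k : ℤ, t ^ k = x := Subgroup.mem_zpowers_iff.1 h
  classical
  rw [expo]
  rw [dif_pos h']
  exact Classical.choose_spec h'

lemma expo_ne_zero {t x : CoprodI M} (h : x ∈ Subgroup.zpowers t) (hx : x ≠ 1) :
    expo t x ≠ 0 := by
  intro hcon
  apply hx
  rw [← expo_spec h, hcon, zpow_zero]

noncomputable def expB (t : CoprodI M) (p : Bool × CoprodI M) : List (Bool × CoprodI M) :=
  if p.1 = true then [p] else tblock t (expo t p.2)

lemma expB_piL {t : CoprodI M} {p : Bool × CoprodI M}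
    (hp : p.1 = false → p.2 ∈ Subgroup.zpowers t) : piL (expB t p) = p.2 := by
  unfold expB
  split
  · simp [piL]
  · rename_i h
    rw [Bool.not_eq_true] at h
    rw [tblock_piL, expo_spec (hp h)]

lemma expB_tags {t : CoprodI M} {p q : Bool × CoprodI M} (hq : q ∈ expB t p) : q.1 = p.1 := by
  unfold expB at hq
  split at hq <;> rename_i h
  · simp only [List.mem_singleton] at hq
    rw [hq]
  · rw [Bool.not_eq_true] at h
    rcases tblock_mem hq with rfl | rfl <;> rw [h]

lemma expB_ne_nil {t : CoprodI M} {p : Bool × CoprodI M}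
    (hp : p.1 = false → p.2 ∈ Subgroup.zpowers t ∧ p.2 ≠ 1) : expB t p ≠ [] := by
  unfold expB
  split
  · simp
  · rename_i h
    rw [Bool.not_eq_true] at h
    exact tblock_ne_nil (expo_ne_zero (hp h).1 (hp h).2)

lemma expB_chain (t : CoprodI M) (p : Bool × CoprodI M) : (expB t p).Chain' Rb := by
  unfold expB
  split
  · exact List.isChain_singleton p
  · exact tblock_chain t _

variable (H : Subgroup (CoprodI M))

lemma expB_shape {t : CoprodI M} {p : Bool × CoprodI M}
    (hp : p.1 = true → p.2 ∈ CC H true ∧ p.2 ≠ 1) :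
    ∀ q ∈ expB t p, ShB H t q := by
  intro q hq
  unfold expB at hq
  split at hq <;> rename_i h
  · simp only [List.mem_singleton] at hq
    subst hq
    constructor
    · intro _; exact hp h
    · intro hf; rw [hf] at h; exact absurd h (by decide)
  · rcases tblock_mem hq with rfl | rfl
    · exact ⟨fun hcon => absurd hcon (by simp), fun _ => Or.inl rfl⟩
    · exact ⟨fun hcon => absurd hcon (by simp), fun _ => Or.inr rfl⟩

noncomputable def flatB (t : CoprodI M) (l : List (Bool × CoprodI M)) :
    List (Bool × CoprodI M) := l.flatMap (expB t)

lemma flatB_nil (t : CoprodI M) : flatB t [] = [] := rfl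

lemma flatB_cons (t : CoprodI M) (p : Bool × CoprodI M) (l : List (Bool × CoprodI M)) :
    flatB t (p :: l) = expB t p ++ flatB t l := by simp [flatB]

lemma flatB_piL {t : CoprodI M} {l : List (Bool × CoprodI M)}
    (hl : ∀ p ∈ l, p.1 = false → p.2 ∈ Subgroup.zpowers t) :
    piL (flatB t l) = piL l := by
  induction l with
  | nil => rfl
  | cons p l ih =>
    rw [flatB_cons, piL_append, piL_cons,
      expB_piL (hl p (by simp)), ih (fun q hq => hl q (by simp [hq]))]

lemma flatB_shape {t : CoprodI M} {l : List (Bool × CoprodI M)}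
    (hl : ∀ p ∈ l, p.1 = true → p.2 ∈ CC H true ∧ p.2 ≠ 1) :
    ∀ q ∈ flatB t l, ShB H t q := by
  induction l with
  | nil => simp [flatB]
  | cons p l ih =>
    intro q hq
    rw [flatB_cons, List.mem_append] at hq
    rcases hq with hq | hq
    · exact expB_shape H (hl p (by simp)) q hq
    · exact ih (fun r hr => hl r (by simp [hr])) q hq

lemma flatB_ne_nil {t : CoprodI M} {l : List (Bool × CoprodI M)} (hl : l ≠ [])
    (hz : ∀ p ∈ l, p.1 = false → p.2 ∈ Subgroup.zpowers t ∧ p.2 ≠ 1) :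
    flatB t l ≠ [] := by
  cases l with
  | nil => exact absurd rfl hl
  | cons p l =>
    rw [flatB_cons]
    intro hcon
    rw [List.append_eq_nil_iff] at hcon
    exact expB_ne_nil (hz p (by simp)) hcon.1

lemma flatB_head_tag {t : CoprodI M} {p : Bool × CoprodI M} {l : List (Bool × CoprodI M)}
    (hz : p.1 = false → p.2 ∈ Subgroup.zpowers t ∧ p.2 ≠ 1)
    {y : Bool × CoprodI M} (hy : y ∈ (flatB t (p :: l)).head?) : y.1 = p.1 := by
  rw [flatB_cons] at hy
  rw [List.head?_append] at hy
  have hne := expB_ne_nil hz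
  have hsome : (expB t p).head?.isSome := by
    rcases hopt : (expB t p).head? with _ | y'
    · exact absurd (List.head?_eq_none_iff.1 hopt) hne
    · rfl
  rw [Option.or_of_isSome hsome] at hy
  exact expB_tags (List.mem_of_mem_head? hy)

lemma flatB_chain {t : CoprodI M} {l : List (Bool × CoprodI M)}
    (hz : ∀ p ∈ l, p.1 = false → p.2 ∈ Subgroup.zpowers t ∧ p.2 ≠ 1)
    (hchain : l.Chain' (fun p q => p.1 ≠ q.1)) : (flatB t l).Chain' Rb := by
  induction l with
  | nil => exact List.isChain_nil
  | cons p l ih =>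
    rw [flatB_cons]
    refine List.IsChain.append (expB_chain t p) (ih (fun q hq => hz q (by simp [hq]))
      hchain.tail) ?_
    intro x hx y hy
    cases l with
    | nil =>
      rw [flatB_nil] at hy
      simp at hy
    | cons p' l' =>
      have hxy : x.1 ≠ y.1 := by
        have hx1 : x.1 = p.1 := expB_tags (List.mem_of_mem_getLast? hx)
        have hy1 : y.1 = p'.1 := flatB_head_tag (hz p' (by simp)) hy
        rw [hx1, hy1]
        exact (List.isChain_cons_cons.1 hchain).1
      exact Rb_of_ne_tags hxy

end Flatten
end FPK
namespace FPK
open Monoid Monoid.CoprodI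

/-- decompose an element of the free product of two subgroups into its letter list -/
lemma word_list {P : Type u} [Group P] (A B : Subgroup P)
    (x : CoprodI (J2 ↥A ↥B)) (hx : x ≠ 1) :
    ∃ l : List (Bool × P),
      (CoprodI.lift (fun b => Bool.rec (motive := fun b => J2 ↥A ↥B b →* P)
        B.subtype A.subtype b)) x = piL l ∧
      l ≠ [] ∧ l.Chain' (fun p q => p.1 ≠ q.1) ∧
      (∀ p ∈ l, (p.1 = true → p.2 ∈ A ∧ p.2 ≠ 1) ∧ (p.1 = false → p.2 ∈ B ∧ p.2 ≠ 1)) := by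
  classical
  set f : ∀ b, J2 ↥A ↥B b →* P :=
    fun b => Bool.rec (motive := fun b => J2 ↥A ↥B b →* P) B.subtype A.subtype b with hf
  set w := Word.equiv (M := J2 ↥A ↥B) x with hw
  have hxw : x = Word.prod w := by
    rw [hw, ← equiv_symm_eq, Equiv.symm_apply_apply]
  refine ⟨w.toList.map (fun le => (le.1, DFunLike.coe (f le.1) le.2)), ?_, ?_, ?_, ?_⟩
  · rw [hxw]
    show CoprodI.lift f (Word.prod w) = _
    rw [Word.prod, MonoidHom.map_list_prod, piL, List.map_map, List.map_map]
    congr 1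
  · have : w ≠ Word.empty := by
      intro hcon
      apply hx
      rw [hxw, hcon, Word.prod_empty]
    intro hcon
    apply this
    ext1
    rw [show (Word.empty : Word (J2 ↥A ↥B)).toList = [] from rfl]
    exact List.map_eq_nil_iff.1 hcon
  · refine (List.isChain_map _).2 ?_
    exact w.chain_ne
  · intro p hp
    rw [List.mem_map] at hp
    obtain ⟨le, hle, rfl⟩ := hp
    have hne1 : le.2 ≠ 1 := w.ne_one le hle
    obtain ⟨i, m⟩ := le
    cases i
    · refine ⟨fun hcon => absurd hcon (by simp), fun _ => ⟨m.2, ?_⟩⟩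
      intro hcon
      apply hne1
      exact Subtype.ext hcon
    · refine ⟨fun _ => ⟨m.2, ?_⟩, fun hcon => absurd hcon (by simp)⟩
      intro hcon
      apply hne1
      exact Subtype.ext hcon

theorem main_decomp {K L : Type u} [Group K] [Group L]
    (H : Subgroup (CoprodI (J2 K L)))
    (a : K) (ha : a ≠ 1) (haH : (CoprodI.of (M := J2 K L) (i := true) a) ∈ H)
    (b : L) (hb : b ≠ 1) (hbH : (CoprodI.of (M := J2 K L) (i := false) b) ∈ H) :
    Decomposable ↥H := by
  classical
  have haCC : (CoprodI.of (M := J2 K L) (i := true) a) ∈ CC H true := of_mem_CC_true H haH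
  have hbCC : (CoprodI.of (M := J2 K L) (i := false) b) ∈ CC H false := of_mem_CC_false H hbH
  have hane : (CoprodI.of (M := J2 K L) (i := true) a) ≠ 1 := fun hcon =>
    ha (CoprodI.of_injective true
      (hcon.trans (map_one (CoprodI.of (M := J2 K L) (i := true))).symm))
  have hbne : (CoprodI.of (M := J2 K L) (i := false) b) ≠ 1 := fun hcon =>
    hb (CoprodI.of_injective false
      (hcon.trans (map_one (CoprodI.of (M := J2 K L) (i := false))).symm))
  have hntA : Nontrivial ↥(CC H true) := by
    refine ⟨⟨⟨_, haCC⟩, 1, ?_⟩⟩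
    intro hcon
    exact hane (by simpa using congrArg Subtype.val hcon)
  by_cases hT : TT H = ∅
  · -- case (a) : free product of the two vertex groups
    have hntB : Nontrivial ↥(CC H false) := by
      refine ⟨⟨⟨_, hbCC⟩, 1, ?_⟩⟩
      intro hcon
      exact hbne (by simpa using congrArg Subtype.val hcon)
    have hgen : CC H true ⊔ CC H false = H := by
      apply le_antisymm
      · exact sup_le (fun h hh => hh.1) (fun h hh => hh.1)
      · intro h hH
        have := generation H h hH
        refine Subgroup.closure_le (CC H true ⊔ CC H false) |>.2 ?_ this
        rintro r (hr | hr)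
        · rcases hr with hr | hr
          · exact Subgroup.mem_sup_left hr
          · exact Subgroup.mem_sup_right hr
        · rw [hT] at hr
          exact absurd hr (by simp)
    have hinj : Function.Injective
        (CoprodI.lift (fun c => Bool.rec
          (motive := fun c => J2 ↥(CC H true) ↥(CC H false) c →* CoprodI (J2 K L))
          (CC H false).subtype (CC H true).subtype c)) := by
      rw [injective_iff_map_eq_one]
      intro x hx1
      by_contra hx
      obtain ⟨l, hpi, hne, hchain, hlet⟩ := word_list (CC H true) (CC H false) x hx
      refine inj_a H l ?_ hchain hne (by rw [← hpi, hx1])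
      intro p hp
      rcases Bool.eq_false_or_eq_true p.1 with h | h
      · have := (hlet p hp).1 h
        exact ⟨by rw [h]; exact this.1, this.2⟩
      · have := (hlet p hp).2 h
        exact ⟨by rw [h]; exact this.1, this.2⟩
    exact decomposable_of_pair (CC H true) (CC H false) H hgen hinj hntA hntB
  · -- case (b) : HNN-type, with a translator t
    obtain ⟨t, ht⟩ := Set.nonempty_iff_ne_empty.2 hT
    have htne : t ≠ 1 := TT_ne_one H ht
    have hntB : Nontrivial ↥(Subgroup.zpowers t) := by
      refine ⟨⟨⟨t, Subgroup.mem_zpowers t⟩, 1, ?_⟩⟩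
      intro hcon
      exact htne (by simpa using congrArg Subtype.val hcon)
    have hgen : CC H true ⊔ Subgroup.zpowers t = H := by
      apply le_antisymm
      · exact sup_le (fun h hh => hh.1) (Subgroup.zpowers_le.2 ht.1)
      · intro h hH
        have := generation H h hH
        refine Subgroup.closure_le (CC H true ⊔ Subgroup.zpowers t) |>.2 ?_ this
        have htmem : t ∈ CC H true ⊔ Subgroup.zpowers t :=
          Subgroup.mem_sup_right (Subgroup.mem_zpowers t)
        rintro r (hr | hr)
        · rcases hr with hr | hr
          · exact Subgroup.mem_sup_left hr
          · -- r ∈ CC H false : conjugate into CC H true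
            have h1 : t * r * t⁻¹ ∈ CC H true := conj_mem_CC H ht hr
            have : r = t⁻¹ * (t * r * t⁻¹) * t := by group
            rw [this]
            exact mul_mem (mul_mem (inv_mem htmem) (Subgroup.mem_sup_left h1)) htmem
        · -- r ∈ TT H
          have h1 : r * t⁻¹ ∈ CC H true := TT_mul_inv_mem_CC H ht hr
          have : r = (r * t⁻¹) * t := by group
          rw [this]
          exact mul_mem (Subgroup.mem_sup_left h1) htmem
    have hinj : Function.Injective
        (CoprodI.lift (fun c => Bool.rec
          (motive := fun c => J2 ↥(CC H true) ↥(Subgroup.zpowers t) c →* CoprodI (J2 K L))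
          (Subgroup.zpowers t).subtype (CC H true).subtype c)) := by
      rw [injective_iff_map_eq_one]
      intro x hx1
      by_contra hx
      obtain ⟨l, hpi, hne, hchain, hlet⟩ := word_list (CC H true) (Subgroup.zpowers t) x hx
      have hzl : ∀ p ∈ l, p.1 = false → p.2 ∈ Subgroup.zpowers t ∧ p.2 ≠ 1 :=
        fun p hp h => (hlet p hp).2 h
      have htl : ∀ p ∈ l, p.1 = true → p.2 ∈ CC H true ∧ p.2 ≠ 1 :=
        fun p hp h => (hlet p hp).1 h
      refine inj_b H ht (flatB t l) (flatB_shape H htl) (flatB_chain hzl hchain)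
        (flatB_ne_nil hne hzl) ?_
      rw [flatB_piL (fun p hp h => (hzl p hp h).1), ← hpi, hx1]
    exact decomposable_of_pair (CC H true) (Subgroup.zpowers t) H hgen hinj hntA hntB

end FPK

theorem stmt0 (G : Type u) [Group G] (H : ℕ → Subgroup G)
    (hnt : ∀ k, (H k : Subgroup G) ≠ ⊥)
    (hnz : ∀ k, ¬ Nonempty (H k ≃* Multiplicative ℤ))
    (hind : ∀ k, ¬ Decomposable (H k))
    (hmono : ∀ k, H k ≤ H (k + 1))
    (hunion : ∀ g : G, ∃ k, g ∈ H k) :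
    ¬ Decomposable G := by
  rintro ⟨K, L, _, _, hK, hL, ⟨φ⟩⟩
  classical
  -- move to the indexed free product
  set ψ : G ≃* Monoid.CoprodI (FPK.J2 K L) := φ.trans (FPK.bridge K L).symm with hψ
  obtain ⟨a, ha⟩ := exists_ne (1 : K)
  obtain ⟨b, hb⟩ := exists_ne (1 : L)
  -- monotonicity
  have hmono' : ∀ i j : ℕ, i ≤ j → H i ≤ H j := by
    intro i j hij
    induction j with
    | zero => rw [Nat.le_zero.1 hij]
    | succ j ih =>
      rcases Nat.lt_or_ge i (j + 1) with h | h
      · exact le_trans (ih (Nat.lt_succ_iff.1 h)) (hmono j)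
      · rw [Nat.le_antisymm hij h]
  obtain ⟨k₁, hk₁⟩ := hunion (ψ.symm (Monoid.CoprodI.of (M := FPK.J2 K L) (i := true) a))
  obtain ⟨k₂, hk₂⟩ := hunion (ψ.symm (Monoid.CoprodI.of (M := FPK.J2 K L) (i := false) b))
  set k := max k₁ k₂ with hk
  have hk₁' := hmono' k₁ k (le_max_left _ _) hk₁
  have hk₂' := hmono' k₂ k (le_max_right _ _) hk₂
  set H' : Subgroup (Monoid.CoprodI (FPK.J2 K L)) := (H k).map ψ.toMonoidHom with hH'
  have haH' : (Monoid.CoprodI.of (M := FPK.J2 K L) (i := true) a) ∈ H' := by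
    exact ⟨_, hk₁', by simp⟩
  have hbH' : (Monoid.CoprodI.of (M := FPK.J2 K L) (i := false) b) ∈ H' := by
    exact ⟨_, hk₂', by simp⟩
  have hdec : Decomposable ↥H' := FPK.main_decomp H' a ha haH' b hb hbH'
  apply hind k
  exact FPK.Decomposable.of_mulEquiv
    ((H k).equivMapOfInjective ψ.toMonoidHom (ψ.injective)) hdec
end

section
/- Let G = K * L be a free product of groups with L non-trivial, and suppose (H_k)_{k≥0} is an increasing chain of subgroups of G with G = ⋃ H_k such that each H_k is contained in some conjugate of K. Then this leads to a contradiction; that is, G cannot equal the union of an increasing chain of subgroups each conjugate into K when L is non-trivial. -/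
/-! The projection `K ∗ L → L` kills `K`, hence every conjugate of `K`; so a nontrivial element
of `L` lies in no subgroup conjugate into `K`, let alone in the union of a chain of them. -/

namespace Monoid.Coprod

variable {K L : Type*} [Group K] [Group L]

theorem snd_eq_one_of_mem_map_conj_range_inl {g x : K ∗ L}
    (hx : x ∈ (inl : K →* K ∗ L).range.map (MulAut.conj g).toMonoidHom) : snd x = 1 := by
  obtain ⟨_, ⟨k, rfl⟩, rfl⟩ := hx
  simp

end Monoid.Coprod

theorem stmt4_general (K L : Type*) [Group K] [Group L] (hL : Nontrivial L)
    (H : ℕ → Subgroup (Monoid.Coprod K L))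
    (hconj : ∀ k, ∃ g : Monoid.Coprod K L,
      H k ≤ ((Monoid.Coprod.inl : K →* Monoid.Coprod K L).range).map
        (MulAut.conj g).toMonoidHom)
    (hunion : ∀ x : Monoid.Coprod K L, ∃ k, x ∈ H k) :
    False := by
  obtain ⟨l, hl⟩ := exists_ne (1 : L)
  obtain ⟨k, hk⟩ := hunion (Monoid.Coprod.inr l)
  obtain ⟨g, hg⟩ := hconj k
  exact hl (by simpa using Monoid.Coprod.snd_eq_one_of_mem_map_conj_range_inl (hg hk))

theorem stmt4 (K L : Type*) [Group K] [Group L] (hL : Nontrivial L)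
    (H : ℕ → Subgroup (Monoid.Coprod K L))
    (hmono : Monotone H)
    (hconj : ∀ k, ∃ g : Monoid.Coprod K L,
      H k ≤ ((Monoid.Coprod.inl : K →* Monoid.Coprod K L).range).map
        (MulAut.conj g).toMonoidHom)
    (hunion : ∀ x : Monoid.Coprod K L, ∃ k, x ∈ H k) :
    False :=
  stmt4_general K L hL H hconj hunion
end

section
/- Let p, q, r, s be prime numbers with p < q and r < s. If the free product ℤ/p * ℤ/q embeds (as a group) into ℤ/r * ℤ/s, then p = r and q = s. -/
/-!
Take a reduced word for an element of finite order. If its first and last letters lie in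
different factors, its powers are again reduced words, so it has infinite order; if they lie in
the same factor and the word has length at least two, conjugating by the last letter merges it
into the first one and shortens the word. So an element of finite order is conjugate into a
factor, and the prime-order elements of `ℤ/r ∗ ℤ/s` have order `r` or `s`. The embedding
preserves the orders `p < q` of the two generators, which forces `p = r` and `q = s`.
-/

open Monoid
open scoped Monoid.Coprod

namespace Monoid.CoprodI

variable {ι : Type*} {G : ι → Type*} [∀ i, Group (G i)]

namespace Word

theorem prod_injective : Function.Injective (prod : Word G → CoprodI G) := by
  classical
  exact equiv.symm.injective

theorem exists_prod_eq_of_mul_prod {i : ι} (c : G i) (w : Word G) (hw : w.fstIdx ≠ some i) :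
    ∃ v : Word G, v.toList.length ≤ w.toList.length + 1 ∧ v.prod = of c * w.prod := by
  by_cases hc : c = 1
  · exact ⟨w, by omega, by rw [hc, map_one, one_mul]⟩
  · exact ⟨cons c w hw hc, by simp, prod_cons _ _ _ _ _⟩

theorem exists_isConj_length_lt {i : ι} {a b : G i} {T : List (Σ i, G i)} (w : Word G)
    (hw : w.toList = ⟨i, a⟩ :: (T ++ [⟨i, b⟩])) :
    ∃ v : Word G, v.toList.length < w.toList.length ∧ IsConj w.prod v.prod := by
  have hT : T <:+: w.toList := hw ▸ ⟨[⟨i, a⟩], [⟨i, b⟩], rfl⟩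
  let m : Word G := ⟨T, fun l hl => w.ne_one l (hT.subset hl), w.chain_ne.infix hT⟩
  have hm : m.fstIdx ≠ some i := by
    have := w.chain_ne
    rw [hw] at this
    rcases T with _ | ⟨l, T⟩
    · simp [m, fstIdx]
    · rw [List.cons_append, List.isChain_cons_cons] at this
      simpa [m, fstIdx, eq_comm] using this.1
  have hprod : w.prod = of a * m.prod * of b := by simp [prod, hw, m, mul_assoc]
  obtain ⟨v, hlen, hv⟩ := exists_prod_eq_of_mul_prod (b * a) m hm
  refine ⟨v, by simp [hw, m] at hlen ⊢; omega, isConj_iff.2 ⟨of b, ?_⟩⟩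
  rw [hv, hprod, map_mul]
  group

end Word

namespace NeWord

theorem prod_ne_one {i j : ι} (w : NeWord G i j) : w.prod ≠ 1 := fun h =>
  w.toList_ne_nil (congrArg Word.toList (Word.prod_injective (h.trans Word.prod_empty.symm)))

theorem not_isOfFinOrder_prod {i j : ι} (w : NeWord G i j) (hij : i ≠ j) :
    ¬IsOfFinOrder w.prod := by
  have hpow : ∀ k : ℕ, ∃ v : NeWord G i j, v.prod = w.prod ^ (k + 1) := by
    intro k
    induction k with
    | zero => exact ⟨w, (pow_one _).symm⟩
    | succ k ih =>
      obtain ⟨v, hv⟩ := ih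
      exact ⟨v.append hij.symm w, by rw [append_prod, hv, ← pow_succ]⟩
  rw [isOfFinOrder_iff_pow_eq_one]
  rintro ⟨n, hn, h⟩
  obtain ⟨k, rfl⟩ := Nat.exists_eq_succ_of_ne_zero hn.ne'
  obtain ⟨v, hv⟩ := hpow k
  exact v.prod_ne_one (hv.trans h)

end NeWord

theorem Word.not_isOfFinOrder_prod {i j : ι} {a : G i} {b : G j} {T : List (Σ i, G i)}
    (w : Word G) (hw : w.toList = ⟨i, a⟩ :: (T ++ [⟨j, b⟩])) (hij : i ≠ j) :
    ¬IsOfFinOrder w.prod := by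
  obtain ⟨i', j', w', rfl⟩ := NeWord.of_word w (by rintro rfl; simp at hw)
  have hhead := w'.toList_head?
  have hlast := w'.toList_getLast?
  change w'.toList = _ at hw
  rw [hw, List.head?_cons, Option.some.injEq, Sigma.mk.inj_iff] at hhead
  rw [hw, ← List.cons_append, List.getLast?_concat, Option.some.injEq, Sigma.mk.inj_iff] at hlast
  exact w'.not_isOfFinOrder_prod (hhead.1 ▸ hlast.1 ▸ hij)

theorem Word.exists_isConj_of_of_isOfFinOrder [Nonempty ι] (w : Word G)
    (hw : IsOfFinOrder w.prod) : ∃ i, ∃ g : G i, IsConj w.prod (of g) := by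
  induction hn : w.toList.length using Nat.strong_induction_on generalizing w with
  | _ n ih =>
  rcases hL : w.toList with _ | ⟨⟨i, a⟩, L⟩
  · exact ⟨Classical.arbitrary ι, 1, by simp [prod, hL]⟩
  rcases L.eq_nil_or_concat' with rfl | ⟨T, ⟨j, b⟩, rfl⟩
  · have hprod : w.prod = of a := by simp [prod, hL]
    exact ⟨i, a, hprod ▸ IsConj.refl _⟩
  obtain rfl : i = j := by_contra fun hij => w.not_isOfFinOrder_prod hL hij hw
  obtain ⟨v, hlen, hconj⟩ := exists_isConj_length_lt w hL
  obtain ⟨k, g, hg⟩ := ih _ (hn ▸ hlen) v (hconj.isOfFinOrder hw) rfl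
  exact ⟨k, g, hconj.trans hg⟩

theorem exists_isConj_of_of_isOfFinOrder [Nonempty ι] {x : CoprodI G} (hx : IsOfFinOrder x) :
    ∃ i, ∃ g : G i, IsConj x (of g) := by
  classical
  have hprod : (Word.equiv x).prod = x := Word.equiv.symm_apply_apply x
  obtain ⟨i, g, hg⟩ := Word.exists_isConj_of_of_isOfFinOrder (Word.equiv x) (by rwa [hprod])
  exact ⟨i, g, hprod ▸ hg⟩

theorem exists_orderOf_eq [Nonempty ι] {x : CoprodI G} (hx : IsOfFinOrder x) :
    ∃ i, ∃ g : G i, orderOf g = orderOf x := by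
  obtain ⟨i, g, c, hc⟩ := exists_isConj_of_of_isOfFinOrder hx
  exact ⟨i, g, by rw [hc.orderOf_eq, orderOf_injective of (of_injective i)]⟩

end Monoid.CoprodI

namespace Monoid.Coprod

universe u

variable (M N : Type u) [Group M] [Group N]

def boolFamily : Bool → Type _ := fun b => cond b M N

instance : ∀ b, Group (boolFamily M N b)
  | true => inferInstanceAs (Group M)
  | false => inferInstanceAs (Group N)

def toCoprodI : M ∗ N →* CoprodI (boolFamily M N) :=
  lift (CoprodI.of (M := boolFamily M N) (i := true))
    (CoprodI.of (M := boolFamily M N) (i := false))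

def ofCoprodI : CoprodI (boolFamily M N) →* M ∗ N :=
  CoprodI.lift fun
    | true => inl
    | false => inr

theorem ofCoprodI_comp_toCoprodI : (ofCoprodI M N).comp (toCoprodI M N) = .id _ :=
  hom_ext (MonoidHom.ext fun _ => CoprodI.lift_of _ _) (MonoidHom.ext fun _ => CoprodI.lift_of _ _)

theorem toCoprodI_injective : Function.Injective (toCoprodI M N) :=
  Function.LeftInverse.injective (DFunLike.congr_fun (ofCoprodI_comp_toCoprodI M N))

variable {M N}

theorem exists_orderOf_eq {x : M ∗ N} (hx : IsOfFinOrder x) :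
    (∃ g : M, orderOf g = orderOf x) ∨ ∃ g : N, orderOf g = orderOf x := by
  have hinj := orderOf_injective _ (toCoprodI_injective M N) x
  obtain ⟨_ | _, g, hg⟩ := CoprodI.exists_orderOf_eq ((toCoprodI M N).isOfFinOrder hx)
  exacts [.inr ⟨g, hg.trans hinj⟩, .inl ⟨g, hg.trans hinj⟩]

end Monoid.Coprod

theorem ZMod.orderOf_ofAdd_one (n : ℕ) : orderOf (Multiplicative.ofAdd (1 : ZMod n)) = n := by
  rw [orderOf_ofAdd_eq_addOrderOf, ZMod.addOrderOf_one]

theorem ZMod.orderOf_multiplicative_eq_one_or_eq {r : ℕ} (hr : r.Prime)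
    (g : Multiplicative (ZMod r)) :
    orderOf g = 1 ∨ orderOf g = r := by
  have : NeZero r := ⟨hr.ne_zero⟩
  exact hr.eq_one_or_self_of_dvd _ (by simpa using orderOf_dvd_card (x := g))

theorem orderOf_zmod_coprod_eq_or_eq {r s : ℕ} (hr : r.Prime) (hs : s.Prime)
    {x : Multiplicative (ZMod r) ∗ Multiplicative (ZMod s)} (hx : (orderOf x).Prime) :
    orderOf x = r ∨ orderOf x = s := by
  have hx1 := hx.one_lt
  rcases Coprod.exists_orderOf_eq (orderOf_pos_iff.1 hx.pos) with ⟨g, hg⟩ | ⟨g, hg⟩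
  · have := ZMod.orderOf_multiplicative_eq_one_or_eq hr g
    omega
  · have := ZMod.orderOf_multiplicative_eq_one_or_eq hs g
    omega

theorem stmt5 (p q r s : ℕ) (hp : p.Prime) (hq : q.Prime) (hr : r.Prime)
    (hs : s.Prime) (hpq : p < q) (hrs : r < s)
    (f : Monoid.Coprod (Multiplicative (ZMod p)) (Multiplicative (ZMod q)) →*
         Monoid.Coprod (Multiplicative (ZMod r)) (Multiplicative (ZMod s)))
    (hf : Function.Injective f) :
    p = r ∧ q = s := by
  have horder (x : Multiplicative (ZMod p) ∗ Multiplicative (ZMod q)) {t : ℕ}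
      (hx : orderOf x = t) (ht : t.Prime) : t = r ∨ t = s := by
    rw [← hx, ← orderOf_injective f hf] at ht ⊢
    exact orderOf_zmod_coprod_eq_or_eq hr hs ht
  have hp' := horder (Coprod.inl (.ofAdd 1)) (by
    rw [orderOf_injective _ Coprod.inl_injective, ZMod.orderOf_ofAdd_one]) hp
  have hq' := horder (Coprod.inr (.ofAdd 1)) (by
    rw [orderOf_injective _ Coprod.inr_injective, ZMod.orderOf_ofAdd_one]) hq
  omega
end

section
/- Let p, q be coprime integers with p, q ≥ 2 and let G_{p,q} = ⟨x, y | x^p = y^q⟩ be the (p,q) torus knot group. Then the center of G_{p,q} is the infinite cyclic subgroup generated by x^p, and the quotient G_{p,q}/Z(G_{p,q}) is isomorphic to the free product ℤ/p * ℤ/q. -/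
/-!
The element `z = x ^ p = y ^ q` commutes with both generators, so it is central, and it has
infinite order because `x ↦ q, y ↦ p` defines a homomorphism to `ℤ` sending `z` to `p * q`.
Killing `z` leaves `⟨x, y | x ^ p, y ^ q⟩ = ℤ/p ∗ ℤ/q`, and a free product of two nontrivial
groups has trivial center (by the normal form of its elements). Hence every central element
of `G_{p,q}` lies in `⟨z⟩`.
-/

/-- Relators for the torus knot group ⟨x, y | x^p = y^q⟩. -/
def torusRels (p q : ℕ) : Set (FreeGroup (Fin 2)) :=
  {FreeGroup.of 0 ^ p * (FreeGroup.of 1 ^ q)⁻¹}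

/-- The (p,q) torus knot group ⟨x, y | x^p = y^q⟩. -/
abbrev TorusKnotGroup (p q : ℕ) := PresentedGroup (torusRels p q)

namespace Subgroup

variable {G : Type*} [Group G]

theorem normal_of_le_center {H : Subgroup G} (h : H ≤ center G) : H.Normal :=
  ⟨fun n hn g => by rwa [mem_center_iff.mp (h hn) g, mul_inv_cancel_right]⟩

theorem center_eq_bot_of_mulEquiv {H : Type*} [Group H] (e : G ≃* H) (h : center H = ⊥) :
    center G = ⊥ :=
  (eq_bot_iff_forall _).2 fun g hg => e.injective <| by
    rw [map_one, ← mem_bot, ← h]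
    exact (MulEquivClass.apply_mem_center_iff e).2 hg

theorem center_le_of_center_quotient_eq_bot {N : Subgroup G} [N.Normal]
    (h : center (G ⧸ N) = ⊥) : center G ≤ N := by
  intro g hg
  have hg' : (g : G ⧸ N) ∈ center (G ⧸ N) := by
    rw [mem_center_iff, QuotientGroup.forall_mk]
    intro y
    rw [← QuotientGroup.mk_mul, ← QuotientGroup.mk_mul, mem_center_iff.mp hg y]
  rwa [h, mem_bot, QuotientGroup.eq_one_iff] at hg'

end Subgroup

namespace Monoid.CoprodI

variable {ι : Type*} {M : ι → Type*} [∀ i, Monoid (M i)]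

namespace Word

variable [∀ i, DecidableEq (M i)]

theorem length_rcons_le {i : ι} (p : Pair M i) :
    (rcons p).toList.length ≤ p.tail.toList.length + 1 := by
  unfold rcons
  split <;> simp

variable [DecidableEq ι]

theorem length_eq_of_fstIdx_eq {i : ι} {w : Word M} (hw : w.fstIdx = some i) :
    w.toList.length = (equivPair i w).tail.toList.length + 1 := by
  obtain ⟨p, rfl⟩ := (equivPair i).symm.surjective w
  rw [Equiv.apply_symm_apply, equivPair_symm] at *
  have hhead : p.head ≠ 1 := by
    intro h
    rw [rcons, dif_pos h] at hw
    exact p.fstIdx_ne hw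
  rw [rcons, dif_neg hhead, cons_toList, List.length_cons]

theorem length_of_smul_le {i : ι} {w : Word M} (hw : w.fstIdx = some i) (m : M i) :
    (of m • w).toList.length ≤ w.toList.length :=
  (length_rcons_le _).trans (length_eq_of_fstIdx_eq hw).ge

end Word

theorem NeWord.fst_eq_of_prod_eq {i j k l : ι} {w₁ : NeWord M i j} {w₂ : NeWord M k l}
    (h : w₁.prod = w₂.prod) : i = k := by
  classical
  have hword : w₁.toWord = w₂.toWord := Word.equiv.symm.injective h
  have hhead := congrArg (fun w : Word M => w.toList.head?) hword
  simp only [NeWord.toWord, NeWord.toList_head?, Option.some.injEq, Sigma.mk.injEq] at hhead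
  exact hhead.1

/-- If `w` is the reduced word of a central `g ≠ 1` and `m ≠ 1` lies in a factor other than that
of the last letter of `w`, the reduced word of `g * of m` is `w` followed by `m`. That of
`of m * g` either starts with `m`, in a factor other than that of the first letter of `w`, or is
no longer than `w`. -/
theorem center_eq_bot {G : ι → Type*} [∀ i, Group (G i)] {i j : ι} (hij : i ≠ j)
    [Nontrivial (G i)] [Nontrivial (G j)] : Subgroup.center (CoprodI G) = ⊥ := by
  classical
  refine (Subgroup.eq_bot_iff_forall _).2 fun g hg => ?_
  by_contra hg1
  obtain ⟨i₁, j₁, w, hw⟩ := NeWord.of_word (Word.equiv g) fun h => hg1 <| by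
    rw [← Word.equiv.symm_apply_apply g, h]; rfl
  have hwg : w.prod = g := by rw [NeWord.prod, hw]; exact Word.equiv.symm_apply_apply g
  obtain ⟨k, m, hm, hk⟩ : ∃ k, ∃ m : G k, m ≠ 1 ∧ j₁ ≠ k := by
    by_cases h : j₁ = i
    · obtain ⟨m, hm⟩ := exists_ne (1 : G j)
      exact ⟨j, m, hm, h ▸ hij⟩
    · obtain ⟨m, hm⟩ := exists_ne (1 : G i)
      exact ⟨i, m, hm, h⟩
  have hcomm : of m * g = g * of m := Subgroup.mem_center_iff.mp hg (of m)
  let wm := w.append hk (NeWord.singleton m hm)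
  have hwm : wm.prod = g * of m := by simp [wm, NeWord.append_prod, hwg]
  by_cases hki : k = i₁
  · subst hki
    have hsmul : of m • w.toWord = wm.toWord := Word.equiv.symm.injective <| by
      change (of m • w.toWord).prod = wm.prod
      rw [Word.prod_smul, ← NeWord.prod, hwg, hwm, hcomm]
    have hfst : w.toWord.fstIdx = some k := by simp [Word.fstIdx, NeWord.toWord]
    have hlen := Word.length_of_smul_le hfst m
    rw [hsmul] at hlen
    simp [wm, NeWord.toWord] at hlen
  · let mw := (NeWord.singleton m hm).append hki w
    have hmw : mw.prod = of m * g := by simp [mw, NeWord.append_prod, hwg]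
    exact hki (NeWord.fst_eq_of_prod_eq (w₁ := mw) (w₂ := wm) (by rw [hmw, hwm, hcomm]))

end Monoid.CoprodI

namespace Monoid.Coprod

universe u

variable {M N : Type u} [Group M] [Group N]

instance instGroupCond : ∀ b : Bool, Group (cond b M N)
  | true => ‹Group M›
  | false => ‹Group N›

def mulEquivCoprodI : M ∗ N ≃* CoprodI (fun b : Bool => cond b M N) :=
  MonoidHom.toMulEquiv
    (lift (CoprodI.of (M := fun b : Bool => cond b M N) (i := true))
      (CoprodI.of (M := fun b : Bool => cond b M N) (i := false)))
    (CoprodI.lift fun | true => inl | false => inr)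
    (by ext <;> simp)
    (by ext (_ | _) <;> simp)

theorem center_eq_bot [Nontrivial M] [Nontrivial N] : Subgroup.center (M ∗ N) = ⊥ :=
  have : Nontrivial (cond true M N) := ‹Nontrivial M›
  have : Nontrivial (cond false M N) := ‹Nontrivial N›
  Subgroup.center_eq_bot_of_mulEquiv mulEquivCoprodI
    (CoprodI.center_eq_bot (i := true) (j := false) Bool.noConfusion)

end Monoid.Coprod

namespace Multiplicative

theorem mem_zpowers_ofAdd_one {n : ℕ} (a : Multiplicative (ZMod n)) :
    a ∈ Subgroup.zpowers (ofAdd 1) := by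
  obtain ⟨k, hk⟩ := ZMod.intCast_surjective a.toAdd
  exact ⟨k, by simp [← ofAdd_zsmul, hk]⟩

theorem orderOf_ofAdd_one (n : ℕ) : orderOf (ofAdd (1 : ZMod n)) = n := by
  rw [orderOf_ofAdd_eq_addOrderOf, ZMod.addOrderOf_one]

theorem ofAdd_one_pow (n : ℕ) : ofAdd (1 : ZMod n) ^ n = 1 := by
  rw [← ofAdd_nsmul, nsmul_one, ZMod.natCast_self, ofAdd_zero]

end Multiplicative

namespace ZMod

variable {G : Type*} [Group G] {n : ℕ}

noncomputable def liftOfPowEqOne {g : G} (hg : g ^ n = 1) : Multiplicative (ZMod n) →* G :=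
  monoidHomOfForallMemZpowers Multiplicative.mem_zpowers_ofAdd_one
    (by rw [Multiplicative.orderOf_ofAdd_one]; exact orderOf_dvd_of_pow_eq_one hg)

@[simp]
theorem liftOfPowEqOne_ofAdd_one {g : G} (hg : g ^ n = 1) :
    liftOfPowEqOne hg (.ofAdd 1) = g :=
  monoidHomOfForallMemZpowers_apply_gen _ _

theorem monoidHom_ext {f₁ f₂ : Multiplicative (ZMod n) →* G}
    (h : f₁ (.ofAdd 1) = f₂ (.ofAdd 1)) : f₁ = f₂ :=
  (MonoidHom.eq_iff_eq_on_generator Multiplicative.mem_zpowers_ofAdd_one f₁ f₂).2 h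

end ZMod

open Monoid
open scoped Monoid.Coprod

namespace TorusKnotGroup

variable {p q : ℕ} {H : Type*} [Group H]

local notation "x" => (PresentedGroup.of 0 : TorusKnotGroup p q)
local notation "y" => (PresentedGroup.of 1 : TorusKnotGroup p q)

theorem of_zero_pow_eq_of_one_pow : x ^ p = y ^ q := by
  have h := PresentedGroup.one_of_mem (rels := torusRels p q) rfl
  rwa [map_mul, map_inv, map_pow, map_pow, mul_inv_eq_one] at h

def lift (a b : H) (hab : a ^ p = b ^ q) : TorusKnotGroup p q →* H :=
  PresentedGroup.toGroup (f := ![a, b]) <| by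
    rintro r rfl
    simp [hab]

@[simp]
theorem lift_of_zero (a b : H) (hab : a ^ p = b ^ q) : lift a b hab x = a :=
  PresentedGroup.toGroup.of _

@[simp]
theorem lift_of_one (a b : H) (hab : a ^ p = b ^ q) : lift a b hab y = b :=
  PresentedGroup.toGroup.of _

theorem hom_ext {f₁ f₂ : TorusKnotGroup p q →* H} (h₀ : f₁ x = f₂ x) (h₁ : f₁ y = f₂ y) :
    f₁ = f₂ :=
  PresentedGroup.ext fun i => by fin_cases i <;> assumption

theorem of_zero_pow_mem_center : x ^ p ∈ Subgroup.center (TorusKnotGroup p q) := by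
  refine Subgroup.mem_center_iff.mpr fun g => Subgroup.mem_centralizer_singleton_iff.mp ?_
  refine PresentedGroup.generated_by _ _ (fun i => ?_) g
  rw [Subgroup.mem_centralizer_singleton_iff]
  fin_cases i
  · exact (Commute.self_pow _ _).eq
  · exact of_zero_pow_eq_of_one_pow (p := p) ▸ (Commute.self_pow _ _).eq

instance : (Subgroup.zpowers (x ^ p)).Normal :=
  Subgroup.normal_of_le_center (Subgroup.zpowers_le.mpr of_zero_pow_mem_center)

def toMultiplicativeInt : TorusKnotGroup p q →* Multiplicative ℤ :=
  lift (.ofAdd q) (.ofAdd p) <| by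
    rw [← ofAdd_nsmul, ← ofAdd_nsmul, nsmul_eq_mul, nsmul_eq_mul, mul_comm]

theorem not_isOfFinOrder_of_zero_pow (hp : p ≠ 0) (hq : q ≠ 0) : ¬IsOfFinOrder (x ^ p) := by
  intro h
  have h' := toMultiplicativeInt.isOfFinOrder h
  rw [map_pow, toMultiplicativeInt, lift_of_zero, ← ofAdd_nsmul, isOfFinOrder_ofAdd_iff,
    isOfFinAddOrder_iff_eq_zero, nsmul_eq_mul] at h'
  simp [hp, hq] at h'

variable (p q) in
def toCoprod : TorusKnotGroup p q →* Multiplicative (ZMod p) ∗ Multiplicative (ZMod q) :=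
  lift (.inl (.ofAdd 1)) (.inr (.ofAdd 1)) <| by
    simp only [← map_pow, Multiplicative.ofAdd_one_pow, map_one]

theorem toCoprod_of_zero_pow : toCoprod p q (x ^ p) = 1 := by
  rw [map_pow, toCoprod, lift_of_zero, ← map_pow, Multiplicative.ofAdd_one_pow, map_one]

theorem mk_of_zero_pow : (x : TorusKnotGroup p q ⧸ Subgroup.zpowers (x ^ p)) ^ p = 1 := by
  rw [← QuotientGroup.mk_pow, QuotientGroup.eq_one_iff]
  exact Subgroup.mem_zpowers _

theorem mk_of_one_pow : (y : TorusKnotGroup p q ⧸ Subgroup.zpowers (x ^ p)) ^ q = 1 := by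
  rw [← QuotientGroup.mk_pow, QuotientGroup.eq_one_iff, ← of_zero_pow_eq_of_one_pow]
  exact Subgroup.mem_zpowers _

variable (p q) in
noncomputable def quotientZPowersEquivCoprod :
    TorusKnotGroup p q ⧸ Subgroup.zpowers (x ^ p) ≃*
      Multiplicative (ZMod p) ∗ Multiplicative (ZMod q) :=
  MonoidHom.toMulEquiv
    (QuotientGroup.lift _ (toCoprod p q) (Subgroup.zpowers_le.mpr toCoprod_of_zero_pow))
    (Coprod.lift (ZMod.liftOfPowEqOne mk_of_zero_pow) (ZMod.liftOfPowEqOne mk_of_one_pow))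
    (QuotientGroup.monoidHom_ext _ <| hom_ext (by simp [toCoprod]) (by simp [toCoprod]))
    (Coprod.hom_ext (ZMod.monoidHom_ext (by simp [toCoprod]))
      (ZMod.monoidHom_ext (by simp [toCoprod])))

theorem center_eq_zpowers (hp : 2 ≤ p) (hq : 2 ≤ q) :
    Subgroup.center (TorusKnotGroup p q) = Subgroup.zpowers (x ^ p) := by
  have : Fact (1 < p) := ⟨hp⟩
  have : Fact (1 < q) := ⟨hq⟩
  refine le_antisymm (Subgroup.center_le_of_center_quotient_eq_bot ?_)
    (Subgroup.zpowers_le.mpr of_zero_pow_mem_center)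
  exact Subgroup.center_eq_bot_of_mulEquiv (quotientZPowersEquivCoprod p q) Coprod.center_eq_bot

end TorusKnotGroup

theorem stmt7_general (p q : ℕ) (hp : 2 ≤ p) (hq : 2 ≤ q) :
    Subgroup.center (TorusKnotGroup p q) =
      Subgroup.zpowers ((PresentedGroup.of 0 : TorusKnotGroup p q) ^ p) ∧
    ¬ IsOfFinOrder ((PresentedGroup.of 0 : TorusKnotGroup p q) ^ p) ∧
    Nonempty ((TorusKnotGroup p q ⧸ Subgroup.center (TorusKnotGroup p q)) ≃*
      Monoid.Coprod (Multiplicative (ZMod p)) (Multiplicative (ZMod q))) := by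
  have hcenter := TorusKnotGroup.center_eq_zpowers hp hq
  refine ⟨hcenter, TorusKnotGroup.not_isOfFinOrder_of_zero_pow (by omega) (by omega), ⟨?_⟩⟩
  exact (QuotientGroup.quotientMulEquivOfEq hcenter).trans
    (TorusKnotGroup.quotientZPowersEquivCoprod p q)

theorem stmt7 (p q : ℕ) (hp : 2 ≤ p) (hq : 2 ≤ q) (hpq : Nat.Coprime p q) :
    Subgroup.center (TorusKnotGroup p q) =
      Subgroup.zpowers ((PresentedGroup.of 0 : TorusKnotGroup p q) ^ p) ∧
    ¬ IsOfFinOrder ((PresentedGroup.of 0 : TorusKnotGroup p q) ^ p) ∧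
    Nonempty ((TorusKnotGroup p q ⧸ Subgroup.center (TorusKnotGroup p q)) ≃*
      Monoid.Coprod (Multiplicative (ZMod p)) (Multiplicative (ZMod q))) :=
  stmt7_general p q hp hq
end
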